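/- arXiv:2605.08793 — 10 statements merged into one kernel-verified Lean document; each statement's English description precedes it below -/
import Mathlib

section
/- Let H = η⁻¹ [diag(T 1_m), T_{−m}; (T_{−m})^T, diag((T_{−m})^T 1_n)] ∈ ℝ^{(n+m−1)×(n+m−1)} be the (reduced) dual Hessian matrix, where T_{−m} denotes T with its m-th column removed and 1_k denotes the all-ones vector in ℝ^k. Let Ω ⊆ {(i,j) : 1 ≤ i ≤ n, 1 ≤ j ≤ m−1} be a sparsification scheme containing the minimum set Ω* = {(i,j) : i = 1 or j = 1, 1 ≤ i ≤ n, 1 ≤ j ≤ m−1}, let T^Ω_{−m} be the n×(m−1) matrix whose (i,j) entry equals T_{ij} if (i,j) ∈ Ω and 0 otherwise, and let H_Ω = η⁻¹ [diag(T 1_m), T^Ω_{−m}; (T^Ω_{−m})^T, diag((T_{−m})^T 1_n)]. Then 0 < λ_min(H) ≤ λ_min(H_Ω) ≤ λ_max(H_Ω) ≤ λ_max(H), where λ_min(A) and λ_max(A) denote the smallest and largest eigenvalues of a symmetric matrix A. -/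
/-!
Write a vector as `(u, v)`. With `s i = T i m / η` (the dropped column) and `W = T_{-m} / η`, the
quadratic form of the block matrix with off-diagonal block `B` is
`∑ i, s i * u i ^ 2 + ∑ i j, (W i j * (u i ^ 2 + v j ^ 2) + 2 * B i j * u i * v j)`.
For `B = W` it equals `∑ s u² + ∑ W (u + v)²`, which is positive off `0` since `s, W > 0`.
Sparsification gives `|B i j| ≤ W i j`, so replacing `(u, v)` by `(|u|, |v|)` or `(|u|, -|v|)`,
vectors of the same norm, bounds the form of `H_Ω` above and below by values of the form of `H`.
The Rayleigh-quotient description of the extreme eigenvalues turns this into the inequalities.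
-/

open Matrix

namespace Matrix.IsHermitian

variable {ι : Type*} [Fintype ι] [DecidableEq ι] {A B : Matrix ι ι ℝ}

lemma sum_dotProduct_eigenvectorBasis_mul (hA : A.IsHermitian) (x y : ι → ℝ) :
    ∑ i, (⇑(hA.eigenvectorBasis i) ⬝ᵥ x) * (⇑(hA.eigenvectorBasis i) ⬝ᵥ y) = x ⬝ᵥ y := by
  simpa [EuclideanSpace.inner_eq_star_dotProduct, dotProduct_comm] using
    hA.eigenvectorBasis.sum_inner_mul_inner (WithLp.toLp 2 x) (WithLp.toLp 2 y)

lemma dotProduct_mulVec_eq_sum_eigenvalues (hA : A.IsHermitian) (x : ι → ℝ) :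
    x ⬝ᵥ A *ᵥ x = ∑ i, hA.eigenvalues i * (⇑(hA.eigenvectorBasis i) ⬝ᵥ x) ^ 2 := by
  rw [← hA.sum_dotProduct_eigenvectorBasis_mul]
  refine Finset.sum_congr rfl fun i _ => ?_
  rw [dotProduct_mulVec, ← mulVec_transpose, ← conjTranspose_eq_transpose_of_trivial, hA.eq,
    hA.mulVec_eigenvectorBasis, smul_dotProduct, smul_eq_mul]
  ring

lemma dotProduct_self_eq_sum (hA : A.IsHermitian) (x : ι → ℝ) :
    x ⬝ᵥ x = ∑ i, (⇑(hA.eigenvectorBasis i) ⬝ᵥ x) ^ 2 := by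
  simp only [sq, hA.sum_dotProduct_eigenvectorBasis_mul]

lemma dotProduct_self_eigenvectorBasis (hA : A.IsHermitian) (i : ι) :
    ⇑(hA.eigenvectorBasis i) ⬝ᵥ ⇑(hA.eigenvectorBasis i) = 1 := by
  have h := real_inner_self_eq_norm_sq (hA.eigenvectorBasis i)
  rw [hA.eigenvectorBasis.orthonormal.1 i, one_pow, EuclideanSpace.inner_eq_star_dotProduct] at h
  simpa using h

lemma dotProduct_mulVec_eigenvectorBasis (hA : A.IsHermitian) (i : ι) :
    ⇑(hA.eigenvectorBasis i) ⬝ᵥ A *ᵥ ⇑(hA.eigenvectorBasis i) = hA.eigenvalues i := by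
  rw [hA.mulVec_eigenvectorBasis, dotProduct_smul, dotProduct_self_eigenvectorBasis, smul_eq_mul,
    mul_one]

lemma iInf_eigenvalues_mul_le (hA : A.IsHermitian) (x : ι → ℝ) :
    (⨅ i, hA.eigenvalues i) * (x ⬝ᵥ x) ≤ x ⬝ᵥ A *ᵥ x := by
  rw [hA.dotProduct_mulVec_eq_sum_eigenvalues, hA.dotProduct_self_eq_sum, Finset.mul_sum]
  exact Finset.sum_le_sum fun i _ => mul_le_mul_of_nonneg_right
    (ciInf_le (Set.finite_range _).bddBelow i) (sq_nonneg _)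

lemma le_iSup_eigenvalues_mul (hA : A.IsHermitian) (x : ι → ℝ) :
    x ⬝ᵥ A *ᵥ x ≤ (⨆ i, hA.eigenvalues i) * (x ⬝ᵥ x) := by
  rw [hA.dotProduct_mulVec_eq_sum_eigenvalues, hA.dotProduct_self_eq_sum, Finset.mul_sum]
  exact Finset.sum_le_sum fun i _ => mul_le_mul_of_nonneg_right
    (le_ciSup (Set.finite_range _).bddAbove i) (sq_nonneg _)

lemma iInf_eigenvalues_pos [Nonempty ι] (hA : A.IsHermitian) (h : ∀ x ≠ 0, 0 < x ⬝ᵥ A *ᵥ x) :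
    0 < ⨅ i, hA.eigenvalues i := by
  obtain ⟨i, hi⟩ := exists_eq_ciInf_of_finite (f := hA.eigenvalues)
  rw [← hi, ← hA.dotProduct_mulVec_eigenvectorBasis]
  refine h _ fun h0 => ?_
  simpa [h0] using hA.dotProduct_self_eigenvectorBasis i

lemma iInf_eigenvalues_le_iInf_eigenvalues [Nonempty ι] (hA : A.IsHermitian) (hB : B.IsHermitian)
    (h : ∀ x, ∃ y, y ⬝ᵥ y = x ⬝ᵥ x ∧ y ⬝ᵥ A *ᵥ y ≤ x ⬝ᵥ B *ᵥ x) :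
    ⨅ i, hA.eigenvalues i ≤ ⨅ i, hB.eigenvalues i := by
  obtain ⟨i, hi⟩ := exists_eq_ciInf_of_finite (f := hB.eigenvalues)
  obtain ⟨y, hyy, hy⟩ := h (hB.eigenvectorBasis i)
  calc ⨅ i, hA.eigenvalues i = (⨅ i, hA.eigenvalues i) * (y ⬝ᵥ y) := by
        rw [hyy, hB.dotProduct_self_eigenvectorBasis, mul_one]
    _ ≤ y ⬝ᵥ A *ᵥ y := hA.iInf_eigenvalues_mul_le y
    _ ≤ _ := hy
    _ = ⨅ i, hB.eigenvalues i := by rw [hB.dotProduct_mulVec_eigenvectorBasis, hi]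

lemma iSup_eigenvalues_le_iSup_eigenvalues [Nonempty ι] (hA : A.IsHermitian) (hB : B.IsHermitian)
    (h : ∀ x, ∃ y, y ⬝ᵥ y = x ⬝ᵥ x ∧ x ⬝ᵥ B *ᵥ x ≤ y ⬝ᵥ A *ᵥ y) :
    ⨆ i, hB.eigenvalues i ≤ ⨆ i, hA.eigenvalues i := by
  obtain ⟨i, hi⟩ := exists_eq_ciSup_of_finite (f := hB.eigenvalues)
  obtain ⟨y, hyy, hy⟩ := h (hB.eigenvectorBasis i)
  calc ⨆ i, hB.eigenvalues i = _ := by rw [← hi, hB.dotProduct_mulVec_eigenvectorBasis]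
    _ ≤ y ⬝ᵥ A *ᵥ y := hy
    _ ≤ (⨆ i, hA.eigenvalues i) * (y ⬝ᵥ y) := hA.le_iSup_eigenvalues_mul y
    _ = ⨆ i, hA.eigenvalues i := by rw [hyy, hB.dotProduct_self_eigenvectorBasis, mul_one]

lemma iInf_eigenvalues_le_iSup_eigenvalues [Nonempty ι] (hA : A.IsHermitian) :
    ⨅ i, hA.eigenvalues i ≤ ⨆ i, hA.eigenvalues i :=
  ciInf_le_ciSup (Set.finite_range _).bddBelow (Set.finite_range _).bddAbove

end Matrix.IsHermitian

lemma abs_mul_mul_le_of_abs_le {b w : ℝ} (h : |b| ≤ w) (a c : ℝ) : |b * a * c| ≤ w * |a| * |c| := by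
  rw [abs_mul, abs_mul, mul_assoc, mul_assoc]
  exact mul_le_mul_of_nonneg_right h (by positivity)

lemma dotProduct_self_abs {ι : Type*} [Fintype ι] (x : ι → ℝ) : |x| ⬝ᵥ |x| = x ⬝ᵥ x := by
  simp [dotProduct]

section BlockHessian

variable {n m : Type*} [Fintype n] [Fintype m] [DecidableEq n] [DecidableEq m]

def blockHessian (s : n → ℝ) (W B : Matrix n m ℝ) : Matrix (n ⊕ m) (n ⊕ m) ℝ :=
  fromBlocks (diagonal fun i => s i + ∑ j, W i j) B Bᵀ (diagonal fun j => ∑ i, W i j)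

variable {s : n → ℝ} {W B : Matrix n m ℝ}

lemma dotProduct_blockHessian_mulVec (u : n → ℝ) (v : m → ℝ) :
    Sum.elim u v ⬝ᵥ blockHessian s W B *ᵥ Sum.elim u v = ∑ i, s i * u i ^ 2 +
      ∑ i, ∑ j, (W i j * (u i ^ 2 + v j ^ 2) + 2 * B i j * u i * v j) := by
  have hu : u ⬝ᵥ diagonal (fun i => s i + ∑ j, W i j) *ᵥ u =
      ∑ i, s i * u i ^ 2 + ∑ i, ∑ j, W i j * u i ^ 2 := by
    simp only [dotProduct, mulVec_diagonal, ← Finset.sum_mul, ← Finset.sum_add_distrib]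
    exact Finset.sum_congr rfl fun i _ => by ring
  have hv : v ⬝ᵥ diagonal (fun j => ∑ i, W i j) *ᵥ v = ∑ i, ∑ j, W i j * v j ^ 2 := by
    simp only [dotProduct, mulVec_diagonal, Finset.sum_mul, Finset.mul_sum]
    rw [Finset.sum_comm]
    exact Finset.sum_congr rfl fun i _ => Finset.sum_congr rfl fun j _ => by ring
  have huv : u ⬝ᵥ B *ᵥ v = ∑ i, ∑ j, B i j * u i * v j := by
    simp only [dotProduct, mulVec, Finset.mul_sum]
    exact Finset.sum_congr rfl fun i _ => Finset.sum_congr rfl fun j _ => by ring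
  rw [blockHessian, fromBlocks_mulVec, Sum.elim_comp_inl, Sum.elim_comp_inr,
    sumElim_dotProduct_sumElim, dotProduct_add, dotProduct_add, mulVec_transpose,
    dotProduct_comm v, ← dotProduct_mulVec, hu, hv, huv]
  simp only [mul_add, Finset.sum_add_distrib, mul_assoc, ← Finset.mul_sum]
  ring

lemma dotProduct_blockHessian_self_mulVec (u : n → ℝ) (v : m → ℝ) :
    Sum.elim u v ⬝ᵥ blockHessian s W W *ᵥ Sum.elim u v =
      ∑ i, s i * u i ^ 2 + ∑ i, ∑ j, W i j * (u i + v j) ^ 2 := by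
  rw [dotProduct_blockHessian_mulVec]
  congr 1
  exact Finset.sum_congr rfl fun i _ => Finset.sum_congr rfl fun j _ => by ring

lemma dotProduct_blockHessian_self_mulVec_pos [Nonempty n] (hs : ∀ i, 0 < s i)
    (hW : ∀ i j, 0 < W i j) {x : n ⊕ m → ℝ} (hx : x ≠ 0) :
    0 < x ⬝ᵥ blockHessian s W W *ᵥ x := by
  rw [← Sum.elim_comp_inl_inr x] at hx ⊢
  set u := x ∘ Sum.inl
  set v := x ∘ Sum.inr
  have hsu : ∀ i, 0 ≤ s i * u i ^ 2 := fun i => mul_nonneg (hs i).le (sq_nonneg _)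
  have hWuv : ∀ i j, 0 ≤ W i j * (u i + v j) ^ 2 := fun i j =>
    mul_nonneg (hW i j).le (sq_nonneg _)
  have h1 : 0 ≤ ∑ i, s i * u i ^ 2 := Finset.sum_nonneg fun i _ => hsu i
  have h2 : 0 ≤ ∑ i, ∑ j, W i j * (u i + v j) ^ 2 :=
    Finset.sum_nonneg fun i _ => Finset.sum_nonneg fun j _ => hWuv i j
  rw [dotProduct_blockHessian_self_mulVec]
  refine (add_nonneg h1 h2).lt_of_ne fun h0 => hx ?_
  obtain ⟨hsu0, hWuv0⟩ := (add_eq_zero_iff_of_nonneg h1 h2).1 h0.symm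
  have hu : ∀ i, u i = 0 := fun i => by
    simpa [(hs i).ne'] using (Finset.sum_eq_zero_iff_of_nonneg fun i _ => hsu i).1 hsu0 i
      (Finset.mem_univ _)
  have hv : ∀ j, v j = 0 := fun j => by
    obtain ⟨i⟩ := ‹Nonempty n›
    have hi := (Finset.sum_eq_zero_iff_of_nonneg fun i _ => Finset.sum_nonneg fun j _ =>
      hWuv i j).1 hWuv0 i (Finset.mem_univ _)
    simpa [(hW i j).ne', hu i] using (Finset.sum_eq_zero_iff_of_nonneg fun j _ => hWuv i j).1 hi j
      (Finset.mem_univ _)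
  ext (i | j)
  · exact hu i
  · exact hv j

lemma exists_dotProduct_blockHessian_mulVec_le (hB : ∀ i j, |B i j| ≤ W i j) (x : n ⊕ m → ℝ) :
    ∃ y, y ⬝ᵥ y = x ⬝ᵥ x ∧ x ⬝ᵥ blockHessian s W B *ᵥ x ≤ y ⬝ᵥ blockHessian s W W *ᵥ y := by
  rw [← Sum.elim_comp_inl_inr x]
  set u := x ∘ Sum.inl
  set v := x ∘ Sum.inr
  refine ⟨Sum.elim |u| |v|, by simp [sumElim_dotProduct_sumElim, dotProduct_self_abs], ?_⟩
  simp only [dotProduct_blockHessian_mulVec, Pi.abs_apply, sq_abs]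
  refine add_le_add le_rfl (Finset.sum_le_sum fun i _ => Finset.sum_le_sum fun j _ => ?_)
  have := (abs_le.1 (abs_mul_mul_le_of_abs_le (hB i j) (u i) (v j))).2
  linarith

lemma exists_dotProduct_blockHessian_mulVec_ge (hB : ∀ i j, |B i j| ≤ W i j) (x : n ⊕ m → ℝ) :
    ∃ y, y ⬝ᵥ y = x ⬝ᵥ x ∧ y ⬝ᵥ blockHessian s W W *ᵥ y ≤ x ⬝ᵥ blockHessian s W B *ᵥ x := by
  rw [← Sum.elim_comp_inl_inr x]
  set u := x ∘ Sum.inl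
  set v := x ∘ Sum.inr
  refine ⟨Sum.elim |u| (-|v|), by simp [sumElim_dotProduct_sumElim, dotProduct_self_abs], ?_⟩
  simp only [dotProduct_blockHessian_mulVec, Pi.neg_apply, Pi.abs_apply, neg_sq, sq_abs]
  refine add_le_add le_rfl (Finset.sum_le_sum fun i _ => Finset.sum_le_sum fun j _ => ?_)
  have := (abs_le.1 (abs_mul_mul_le_of_abs_le (hB i j) (u i) (v j))).1
  linarith

end BlockHessian

open Matrix in

-- The paper's `m` is `m + 1` here: `Tm` is `T` without its last column `Fin.last m`.
theorem stmt0_general (n m : ℕ) (hn : 1 ≤ n)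
    (M : Matrix (Fin n) (Fin (m + 1)) ℝ) (η : ℝ) (hη : 0 < η)
    (α : Fin n → ℝ) (β : Fin (m + 1) → ℝ)
    (T : Matrix (Fin n) (Fin (m + 1)) ℝ)
    (hT : ∀ i j, T i j = Real.exp ((α i + β j - M i j) / η))
    (Tm : Matrix (Fin n) (Fin m) ℝ)
    (hTm : ∀ i j, Tm i j = T i (Fin.castSucc j))
    (Ω : Set (Fin n × Fin m))
    (TΩ : Matrix (Fin n) (Fin m) ℝ)
    (hTΩin : ∀ i j, (i, j) ∈ Ω → TΩ i j = Tm i j)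
    (hTΩout : ∀ i j, (i, j) ∉ Ω → TΩ i j = 0)
    (H HΩ : Matrix (Fin n ⊕ Fin m) (Fin n ⊕ Fin m) ℝ)
    (hH : H = η⁻¹ • Matrix.fromBlocks
      (Matrix.diagonal fun i => ∑ j, T i j) Tm
      Tmᵀ (Matrix.diagonal fun j => ∑ i, Tm i j))
    (hHΩ : HΩ = η⁻¹ • Matrix.fromBlocks
      (Matrix.diagonal fun i => ∑ j, T i j) TΩ
      TΩᵀ (Matrix.diagonal fun j => ∑ i, Tm i j))
    (hHherm : H.IsHermitian) (hHΩherm : HΩ.IsHermitian) :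
    0 < (⨅ i, hHherm.eigenvalues i) ∧
    (⨅ i, hHherm.eigenvalues i) ≤ (⨅ i, hHΩherm.eigenvalues i) ∧
    (⨅ i, hHΩherm.eigenvalues i) ≤ (⨆ i, hHΩherm.eigenvalues i) ∧
    (⨆ i, hHΩherm.eigenvalues i) ≤ (⨆ i, hHherm.eigenvalues i) := by
  have : Nonempty (Fin n) := ⟨⟨0, hn⟩⟩
  have hTpos : ∀ i j, 0 < T i j := fun i j => hT i j ▸ Real.exp_pos _
  set s : Fin n → ℝ := fun i => η⁻¹ * T i (Fin.last m)
  set W := η⁻¹ • Tm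
  have hblock : ∀ B : Matrix (Fin n) (Fin m) ℝ, η⁻¹ • fromBlocks (diagonal fun i => ∑ j, T i j) B
      Bᵀ (diagonal fun j => ∑ i, Tm i j) = blockHessian s W (η⁻¹ • B) := by
    intro B
    ext (i | j) (i' | j') <;>
      simp [blockHessian, W, s, diagonal_apply, Fin.sum_univ_castSucc, hTm, mul_add,
        Finset.mul_sum, add_comm]
  have hs : ∀ i, 0 < s i := fun i => mul_pos (inv_pos.2 hη) (hTpos _ _)
  have hW : ∀ i j, 0 < W i j := fun i j => mul_pos (inv_pos.2 hη) (hTm i j ▸ hTpos _ _)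
  have hTΩW : ∀ i j, |(η⁻¹ • TΩ) i j| ≤ W i j := fun i j => by
    by_cases hij : (i, j) ∈ Ω
    · simpa [hTΩin i j hij, W] using (abs_of_pos (hW i j)).le
    · simpa [hTΩout i j hij] using (hW i j).le
  rw [hblock] at hH hHΩ
  subst hH hHΩ
  exact ⟨hHherm.iInf_eigenvalues_pos fun x hx => dotProduct_blockHessian_self_mulVec_pos hs hW hx,
    hHherm.iInf_eigenvalues_le_iInf_eigenvalues hHΩherm
      (exists_dotProduct_blockHessian_mulVec_ge hTΩW),
    hHΩherm.iInf_eigenvalues_le_iSup_eigenvalues,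
    hHherm.iSup_eigenvalues_le_iSup_eigenvalues hHΩherm
      (exists_dotProduct_blockHessian_mulVec_le hTΩW)⟩

open Matrix in
/-- Sparsifying the reduced dual Hessian `H` to `H_Ω` (for any
sparsification scheme `Ω` containing `Ω* = {(i,j) : i = 1 or j = 1}`) does not
expand the range of its eigenvalues:
`0 < λ_min(H) ≤ λ_min(H_Ω) ≤ λ_max(H_Ω) ≤ λ_max(H)`.
Here the full matrix has `m+1` columns (so that "m−1" in the paper corresponds to `m`),
`Tm` is `T` with its last column removed, and indices of `Ω` with first coordinate 0
correspond to "i = 1", etc. -/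
theorem stmt0 (n m : ℕ) (hn : 1 ≤ n) (hm : 1 ≤ m)
    (M : Matrix (Fin n) (Fin (m + 1)) ℝ) (η : ℝ) (hη : 0 < η)
    (α : Fin n → ℝ) (β : Fin (m + 1) → ℝ)
    (T : Matrix (Fin n) (Fin (m + 1)) ℝ)
    (hT : ∀ i j, T i j = Real.exp ((α i + β j - M i j) / η))
    (Tm : Matrix (Fin n) (Fin m) ℝ)
    (hTm : ∀ i j, Tm i j = T i (Fin.castSucc j))
    (Ω : Set (Fin n × Fin m))
    (hΩ : ∀ p : Fin n × Fin m, ((p.1 : ℕ) = 0 ∨ (p.2 : ℕ) = 0) → p ∈ Ω)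
    (TΩ : Matrix (Fin n) (Fin m) ℝ)
    (hTΩin : ∀ i j, (i, j) ∈ Ω → TΩ i j = Tm i j)
    (hTΩout : ∀ i j, (i, j) ∉ Ω → TΩ i j = 0)
    (H HΩ : Matrix (Fin n ⊕ Fin m) (Fin n ⊕ Fin m) ℝ)
    (hH : H = η⁻¹ • Matrix.fromBlocks
      (Matrix.diagonal fun i => ∑ j, T i j) Tm
      Tmᵀ (Matrix.diagonal fun j => ∑ i, Tm i j))
    (hHΩ : HΩ = η⁻¹ • Matrix.fromBlocks
      (Matrix.diagonal fun i => ∑ j, T i j) TΩ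
      TΩᵀ (Matrix.diagonal fun j => ∑ i, Tm i j))
    (hHherm : H.IsHermitian) (hHΩherm : HΩ.IsHermitian) :
    0 < (⨅ i, hHherm.eigenvalues i) ∧
    (⨅ i, hHherm.eigenvalues i) ≤ (⨅ i, hHΩherm.eigenvalues i) ∧
    (⨅ i, hHΩherm.eigenvalues i) ≤ (⨆ i, hHΩherm.eigenvalues i) ∧
    (⨆ i, hHΩherm.eigenvalues i) ≤ (⨆ i, hHherm.eigenvalues i) :=
  stmt0_general n m hn M η hη α β T hT Tm hTm Ω TΩ hTΩin hTΩout H HΩ hH hHΩ hHherm hHΩherm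
end

section
/- Let {x_k}_{k≥0} ⊆ ℝ^N be a sequence such that for every k ≥ 1 there exist a symmetric matrix B_k ∈ ℝ^{N×N} whose eigenvalues all lie in [m_B, M_B], a step size γ_k > 0, and a quasi-Newton candidate x^q_k = x_{k−1} + γ_k d_k with d_k = −B_k⁻¹ ∇f(x_{k−1}), such that the Wolfe conditions hold at (x_{k−1}, d_k, γ_k), i.e. f(x^q_k) ≤ f(x_{k−1}) + c₁ γ_k ∇f(x_{k−1})^T d_k and ∇f(x^q_k)^T d_k ≥ c₂ ∇f(x_{k−1})^T d_k, and such that f(x_k) ≤ f(x^q_k) (in particular this covers both x_k = x^q_k and x_k chosen as an arbitrary alternative candidate x^s_k whenever f(x^s_k) ≤ f(x^q_k), as in the modified SPLR algorithm with candidate selection every S-th iteration). Then ‖∇f(x_k)‖ → 0 as k → ∞. -/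
open scoped RealInnerProductSpace Matrix

open Set Filter Topology

/-!
Along a direction `d` with `⟪∇f(x), d⟫ ≤ 0`, the curvature condition and the `L`-Lipschitz
gradient force the step to be long, `γ ≥ (1 - c₂) ⟪-∇f(x), d⟫ / (L ‖d‖²)`, so the Armijo condition
yields Zoutendijk's decrease `c₁ (1 - c₂) / L · cos² θ · ‖∇f(x)‖²`, where `θ` is the angle between
`d` and `-∇f(x)`. For `d = -B⁻¹ ∇f(x)` with the spectrum of `B` in `[m, M]` one has `cos θ ≥ m / M`,
so every iteration decreases `f` by a fixed multiple of `‖∇f(x_k)‖²`; since `f` is bounded below,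
these decrements tend to zero.
-/

namespace OrthonormalBasis

variable {ι E : Type*} [Fintype ι] [NormedAddCommGroup E] [InnerProductSpace ℝ E]
  (b : OrthonormalBasis ι ℝ E) {T : E →ₗ[ℝ] E} {μ : ι → ℝ}

theorem norm_sq_eq_sum (v : E) : ‖v‖ ^ 2 = ∑ i, b.repr v i ^ 2 := by
  rw [← b.repr.norm_map, EuclideanSpace.real_norm_sq_eq]

theorem repr_apply_of_apply_eq_smul (hT : ∀ i, T (b i) = μ i • b i) (v : E) (i : ι) :
    b.repr (T v) i = μ i * b.repr v i := by
  classical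
  conv_lhs => rw [← b.sum_repr v]
  simp [map_sum, hT, Pi.single_apply, mul_comm]

theorem inner_self_apply_eq_sum (hT : ∀ i, T (b i) = μ i • b i) (v : E) :
    ⟪v, T v⟫ = ∑ i, μ i * b.repr v i ^ 2 := by
  rw [← b.repr.inner_map_map, PiLp.inner_apply]
  simp [b.repr_apply_of_apply_eq_smul hT, sq, mul_comm, mul_left_comm]

theorem norm_apply_sq_eq_sum (hT : ∀ i, T (b i) = μ i • b i) (v : E) :
    ‖T v‖ ^ 2 = ∑ i, (μ i * b.repr v i) ^ 2 := by
  rw [b.norm_sq_eq_sum]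
  simp [b.repr_apply_of_apply_eq_smul hT]

theorem mul_norm_sq_le_inner_self_apply (hT : ∀ i, T (b i) = μ i • b i) {a : ℝ}
    (ha : ∀ i, a ≤ μ i) (v : E) :
    a * ‖v‖ ^ 2 ≤ ⟪v, T v⟫ := by
  rw [b.inner_self_apply_eq_sum hT, b.norm_sq_eq_sum, Finset.mul_sum]
  exact Finset.sum_le_sum fun i _ => mul_le_mul_of_nonneg_right (ha i) (sq_nonneg _)

theorem norm_apply_le (hT : ∀ i, T (b i) = μ i • b i) {c : ℝ} (hc : 0 ≤ c)
    (hμ : ∀ i, |μ i| ≤ c) (v : E) :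
    ‖T v‖ ≤ c * ‖v‖ := by
  rw [← pow_le_pow_iff_left₀ (norm_nonneg _) (by positivity) two_ne_zero,
    b.norm_apply_sq_eq_sum hT, mul_pow, b.norm_sq_eq_sum, Finset.mul_sum]
  refine Finset.sum_le_sum fun i _ => ?_
  rw [mul_pow]
  exact mul_le_mul_of_nonneg_right (sq_le_sq.2 (by rw [abs_of_nonneg hc]; exact hμ i))
    (sq_nonneg _)

theorem div_mul_norm_le_inner_self_apply_div_norm (hT : ∀ i, T (b i) = μ i • b i)
    {a c : ℝ} (ha : 0 < a) (hac : a ≤ c) (hμ : ∀ i, μ i ∈ Icc a c) (v : E) :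
    a / c * ‖v‖ ≤ ⟪v, T v⟫ / ‖T v‖ := by
  have hlow := b.mul_norm_sq_le_inner_self_apply hT (fun i => (hμ i).1) v
  rcases eq_or_ne (T v) 0 with hTv | hTv
  · rw [hTv, inner_zero_right] at hlow
    have hv : v = 0 := norm_eq_zero.1 (pow_eq_zero_iff two_ne_zero |>.1
      (le_antisymm (nonpos_of_mul_nonpos_right hlow ha) (sq_nonneg _)))
    simp [hv]
  have hc : 0 < c := ha.trans_le hac
  have hup := b.norm_apply_le hT hc.le
    (fun i => abs_le.2 ⟨by linarith [(hμ i).1], (hμ i).2⟩) v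
  rw [le_div_iff₀ (norm_pos_iff.2 hTv)]
  calc a / c * ‖v‖ * ‖T v‖ ≤ a / c * ‖v‖ * (c * ‖v‖) := by gcongr
    _ = a * ‖v‖ ^ 2 := by field_simp
    _ ≤ ⟪v, T v⟫ := hlow

end OrthonormalBasis

theorem Matrix.IsHermitian.toEuclideanLin_inv_eigenvectorBasis {n : Type*} [Fintype n]
    [DecidableEq n] {B : Matrix n n ℝ} (hB : B.IsHermitian) (h : ∀ i, hB.eigenvalues i ≠ 0)
    (i : n) :
    Matrix.toEuclideanLin B⁻¹ (hB.eigenvectorBasis i) =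
      (hB.eigenvalues i)⁻¹ • hB.eigenvectorBasis i := by
  have hdet : IsUnit B.det := by
    rw [hB.det_eq_prod_eigenvalues]
    exact (Finset.prod_ne_zero_iff.2 fun i _ => h i).isUnit
  apply WithLp.ofLp_injective
  simp only [Matrix.ofLp_toLpLin, Matrix.toLin'_apply, WithLp.ofLp_smul]
  calc B⁻¹ *ᵥ ⇑(hB.eigenvectorBasis i)
      = (hB.eigenvalues i)⁻¹ • (B⁻¹ *ᵥ (B *ᵥ ⇑(hB.eigenvectorBasis i))) := by
        rw [hB.mulVec_eigenvectorBasis, Matrix.mulVec_smul, smul_smul, inv_mul_cancel₀ (h i),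
          one_smul]
    _ = (hB.eigenvalues i)⁻¹ • ⇑(hB.eigenvectorBasis i) := by
        rw [Matrix.mulVec_mulVec, Matrix.nonsing_inv_mul B hdet, Matrix.one_mulVec]

section Wolfe

variable {E : Type*} [NormedAddCommGroup E] [InnerProductSpace ℝ E] [CompleteSpace E]
  {f : E → ℝ} {L c₁ c₂ γ : ℝ} {x d : E}

theorem wolfe_curvature_step_bound (hlip : ∀ x y, ‖gradient f x - gradient f y‖ ≤ L * ‖x - y‖)
    (hγ : 0 ≤ γ) (hcurv : ⟪gradient f (x + γ • d), d⟫ ≥ c₂ * ⟪gradient f x, d⟫) :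
    (1 - c₂) * -⟪gradient f x, d⟫ ≤ L * γ * ‖d‖ ^ 2 :=
  calc (1 - c₂) * -⟪gradient f x, d⟫ ≤ ⟪gradient f (x + γ • d) - gradient f x, d⟫ := by
        rw [inner_sub_left]; linarith
    _ ≤ ‖gradient f (x + γ • d) - gradient f x‖ * ‖d‖ := real_inner_le_norm _ _
    _ ≤ L * ‖(x + γ • d) - x‖ * ‖d‖ := by gcongr; exact hlip _ _
    _ = L * γ * ‖d‖ ^ 2 := by
        rw [add_sub_cancel_left, norm_smul, Real.norm_of_nonneg hγ]; ring

theorem wolfe_sufficient_decrease (hL : 0 < L)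
    (hlip : ∀ x y, ‖gradient f x - gradient f y‖ ≤ L * ‖x - y‖) (hc₁ : 0 ≤ c₁) (hγ : 0 ≤ γ)
    (hdesc : ⟪gradient f x, d⟫ ≤ 0)
    (harmijo : f (x + γ • d) ≤ f x + c₁ * γ * ⟪gradient f x, d⟫)
    (hcurv : ⟪gradient f (x + γ • d), d⟫ ≥ c₂ * ⟪gradient f x, d⟫) :
    f (x + γ • d) ≤ f x - c₁ * (1 - c₂) / L * (⟪gradient f x, d⟫ / ‖d‖) ^ 2 := by
  suffices c₁ * (1 - c₂) / L * (⟪gradient f x, d⟫ / ‖d‖) ^ 2 ≤ c₁ * γ * -⟪gradient f x, d⟫ by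
    linarith
  rcases eq_or_ne d 0 with rfl | hd
  · simp
  have hstep := wolfe_curvature_step_bound hlip hγ hcurv
  have ha := neg_nonneg.2 hdesc
  rw [← neg_sq, ← neg_div]
  generalize -⟪gradient f x, d⟫ = a at ha hstep ⊢
  have hd' : 0 < ‖d‖ := norm_pos_iff.2 hd
  calc c₁ * (1 - c₂) / L * (a / ‖d‖) ^ 2 = c₁ * a * ((1 - c₂) * a / (L * ‖d‖ ^ 2)) := by
        field_simp
    _ ≤ c₁ * a * γ := by
        gcongr
        rw [div_le_iff₀ (by positivity)]; linarith
    _ = c₁ * γ * a := by ring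

end Wolfe

theorem quasiNewton_wolfe_sufficient_decrease {n : Type*} [Fintype n] [DecidableEq n]
    {f : EuclideanSpace ℝ n → ℝ} {L c₁ c₂ m M γ : ℝ} (hL : 0 < L)
    (hlip : ∀ x y, ‖gradient f x - gradient f y‖ ≤ L * ‖x - y‖) (hc₁ : 0 ≤ c₁) (hc₂ : c₂ ≤ 1)
    (hm : 0 < m) (hmM : m ≤ M) {B : Matrix n n ℝ} (hB : B.IsHermitian)
    (heig : ∀ i, hB.eigenvalues i ∈ Icc m M) (hγ : 0 ≤ γ) {x : EuclideanSpace ℝ n}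
    (harmijo : let d := -Matrix.toEuclideanLin B⁻¹ (gradient f x)
      f (x + γ • d) ≤ f x + c₁ * γ * ⟪gradient f x, d⟫)
    (hcurv : let d := -Matrix.toEuclideanLin B⁻¹ (gradient f x)
      ⟪gradient f (x + γ • d), d⟫ ≥ c₂ * ⟪gradient f x, d⟫) :
    f (x + γ • -Matrix.toEuclideanLin B⁻¹ (gradient f x)) ≤
      f x - c₁ * (1 - c₂) / L * (m / M) ^ 2 * ‖gradient f x‖ ^ 2 := by
  set g := gradient f x
  set T := Matrix.toEuclideanLin B⁻¹
  have hM : 0 < M := hm.trans_le hmM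
  have hT := hB.toEuclideanLin_inv_eigenvectorBasis fun i => (hm.trans_le (heig i).1).ne'
  have hμ : ∀ i, (hB.eigenvalues i)⁻¹ ∈ Icc M⁻¹ m⁻¹ := fun i =>
    ⟨inv_anti₀ (hm.trans_le (heig i).1) (heig i).2, inv_anti₀ hm (heig i).1⟩
  have hdesc : ⟪g, -T g⟫ ≤ 0 := by
    rw [inner_neg_right, neg_nonpos]
    exact (hB.eigenvectorBasis.mul_norm_sq_le_inner_self_apply hT (fun i => (hμ i).1) g).trans'
      (by positivity)
  have hangle : m / M * ‖g‖ ≤ -⟪g, -T g⟫ / ‖-T g‖ := by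
    rw [inner_neg_right, neg_neg, norm_neg, ← inv_div_inv]
    exact hB.eigenvectorBasis.div_mul_norm_le_inner_self_apply_div_norm hT (inv_pos.2 hM)
      (inv_anti₀ hm hmM) hμ g
  calc f (x + γ • -T g) ≤ f x - c₁ * (1 - c₂) / L * (⟪g, -T g⟫ / ‖-T g‖) ^ 2 :=
        wolfe_sufficient_decrease hL hlip hc₁ hγ hdesc harmijo hcurv
    _ ≤ f x - c₁ * (1 - c₂) / L * (m / M) ^ 2 * ‖g‖ ^ 2 := by
        have : 0 ≤ c₁ * (1 - c₂) / L := by have := sub_nonneg.2 hc₂; positivity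
        rw [mul_assoc _ ((m / M) ^ 2), ← mul_pow, ← neg_sq, ← neg_div]
        gcongr

theorem tendsto_zero_of_le_sub_of_bddBelow {u v : ℕ → ℝ} (hu : BddBelow (range u))
    (hv : ∀ k, 0 ≤ v k) (hdec : ∀ k, u (k + 1) ≤ u k - v k) : Tendsto v atTop (𝓝 0) := by
  have hanti : Antitone u := antitone_nat_of_succ_le fun k => by linarith [hv k, hdec k]
  have hlim := tendsto_atTop_ciInf hanti hu
  have hdiff : Tendsto (fun k => u k - u (k + 1)) atTop (𝓝 0) := by
    simpa using hlim.sub (hlim.comp (tendsto_add_atTop_nat 1))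
  exact squeeze_zero hv (fun k => by linarith [hdec k]) hdiff

theorem stmt1_general (N : ℕ)
    (f : EuclideanSpace ℝ (Fin N) → ℝ)
    (hbdd : BddBelow (Set.range f))
    (L : ℝ) (hL : 0 < L)
    (hlip : ∀ x y, ‖gradient f x - gradient f y‖ ≤ L * ‖x - y‖)
    (c₁ c₂ mB MB : ℝ)
    (hc₁0 : 0 < c₁) (hc₂1 : c₂ < 1)
    (hmB : 0 < mB) (hmM : mB ≤ MB)
    (x : ℕ → EuclideanSpace ℝ (Fin N))
    (hstep : ∀ k : ℕ, ∃ (B : Matrix (Fin N) (Fin N) ℝ) (hB : B.IsHermitian) (γ : ℝ),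
      (∀ i, hB.eigenvalues i ∈ Set.Icc mB MB) ∧ 0 < γ ∧
      (let g := gradient f (x k)
       let d := -((Matrix.toEuclideanLin (B⁻¹)) g)
       let xq := x k + γ • d
       f xq ≤ f (x k) + c₁ * γ * ⟪g, d⟫ ∧
       ⟪gradient f xq, d⟫ ≥ c₂ * ⟪g, d⟫ ∧
       f (x (k + 1)) ≤ f xq)) :
    Filter.Tendsto (fun k => ‖gradient f (x k)‖) Filter.atTop (nhds 0) := by
  set C := c₁ * (1 - c₂) / L * (mB / MB) ^ 2
  have hC : 0 < C := by
    have := sub_pos.2 hc₂1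
    have := hmB.trans_le hmM
    positivity
  have hdec : ∀ k, f (x (k + 1)) ≤ f (x k) - C * ‖gradient f (x k)‖ ^ 2 := fun k => by
    obtain ⟨B, hB, γ, heig, hγ, harmijo, hcurv, hacc⟩ := hstep k
    exact hacc.trans <| quasiNewton_wolfe_sufficient_decrease hL hlip hc₁0.le hc₂1.le hmB hmM
      hB heig hγ.le harmijo hcurv
  have hsq := tendsto_zero_of_le_sub_of_bddBelow (hbdd.mono (range_comp_subset_range x f))
    (fun k => by positivity) hdec
  simpa [hC.ne', Real.sqrt_sq] using (hsq.div_const C).sqrt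

/-- Global convergence (`‖∇f(x_k)‖ → 0`) of the modified SPLR iteration,
where each step uses a symmetric matrix `B_k` with eigenvalues in `[m_B, M_B]`, a
quasi-Newton candidate `x^q_k = x_{k−1} + γ_k d_k` with `d_k = −B_k⁻¹ ∇f(x_{k−1})`
satisfying the Wolfe conditions, and the accepted iterate satisfies `f(x_k) ≤ f(x^q_k)`. -/
theorem stmt1 (N : ℕ) (hN : 1 ≤ N)
    (f : EuclideanSpace ℝ (Fin N) → ℝ) (hf : Differentiable ℝ f)
    (hbdd : BddBelow (Set.range f))
    (L : ℝ) (hL : 0 < L)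
    (hlip : ∀ x y, ‖gradient f x - gradient f y‖ ≤ L * ‖x - y‖)
    (c₁ c₂ mB MB : ℝ)
    (hc₁0 : 0 < c₁) (hc₁half : c₁ < 1 / 2) (hc₁₂ : c₁ < c₂) (hc₂1 : c₂ < 1)
    (hmB : 0 < mB) (hmM : mB ≤ MB)
    (x : ℕ → EuclideanSpace ℝ (Fin N))
    (hstep : ∀ k : ℕ, ∃ (B : Matrix (Fin N) (Fin N) ℝ) (hB : B.IsHermitian) (γ : ℝ),
      (∀ i, hB.eigenvalues i ∈ Set.Icc mB MB) ∧ 0 < γ ∧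
      (let g := gradient f (x k)
       let d := -((Matrix.toEuclideanLin (B⁻¹)) g)
       let xq := x k + γ • d
       f xq ≤ f (x k) + c₁ * γ * ⟪g, d⟫ ∧
       ⟪gradient f xq, d⟫ ≥ c₂ * ⟪g, d⟫ ∧
       f (x (k + 1)) ≤ f xq)) :
    Filter.Tendsto (fun k => ‖gradient f (x k)‖) Filter.atTop (nhds 0) :=
  stmt1_general N f hbdd L hL hlip c₁ c₂ mB MB hc₁0 hc₂1 hmB hmM x hstep
end

section
/- Let x ∈ ℝ^N with g = ∇f(x) ≠ 0, let B ∈ ℝ^{N×N} be a symmetric matrix whose eigenvalues all lie in [m_B, M_B] with 0 < m_B ≤ M_B, set d = −B⁻¹ g, and let γ > 0 be a step size such that x⁺ = x + γd satisfies both Wolfe conditions: f(x⁺) ≤ f(x) + c₁ γ g^T d and ∇f(x⁺)^T d ≥ c₂ g^T d, where 0 < c₁ < 1/2 and c₁ < c₂ < 1. Then f(x⁺) ≤ f(x) − C‖g‖², where C = c₁(1 − c₂) m_B² / (L · M_B²). -/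
set_option maxHeartbeats 1000000

open scoped RealInnerProductSpace

/-- Auxiliary arithmetic lemma. -/
lemma stmt6_aux (L mB MB c₁ c₂ γ α β G : ℝ) (hL : 0 < L) (hmB : 0 < mB) (hmM : mB ≤ MB)
    (hc₁ : 0 < c₁) (hc₂ : c₂ < 1) (hγ : 0 < γ) (hβ : 0 < β) (hα : 0 < α)
    (h1 : mB * β ≤ α) (h2 : G ≤ MB * α) (h3 : (1 - c₂) * α ≤ L * γ * β) (hG : 0 ≤ G) :
    c₁ * (1 - c₂) * mB ^ 2 / (L * MB ^ 2) * G ≤ c₁ * γ * α := by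
  have hMB : 0 < MB := lt_of_lt_of_le hmB hmM
  rw [div_mul_eq_mul_div, div_le_iff₀ (by positivity)]
  have hc2 : 0 < 1 - c₂ := by linarith
  have hβmul : c₁ * (1 - c₂) * mB ^ 2 * G * β ≤ c₁ * γ * α * (L * MB ^ 2) * β := by
    have a1 : mB ^ 2 * β ≤ mB * α := by nlinarith [mul_le_mul_of_nonneg_left h1 hmB.le]
    have e1 : mB ^ 2 * G * β ≤ MB ^ 2 * α ^ 2 := by
      have s1 : mB ^ 2 * β * G ≤ mB * α * G := mul_le_mul_of_nonneg_right a1 hG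
      have s2 : mB * α * G ≤ mB * α * (MB * α) :=
        mul_le_mul_of_nonneg_left h2 (mul_pos hmB hα).le
      have s3 : mB * α * (MB * α) ≤ MB ^ 2 * α ^ 2 := by
        nlinarith [mul_nonneg (mul_nonneg (sub_nonneg.mpr hmM) hMB.le) (mul_pos hα hα).le]
      nlinarith [s1, s2, s3]
    have e2 : c₁ * ((1 - c₂) * α) * (α * MB ^ 2) ≤ c₁ * (L * γ * β) * (α * MB ^ 2) := by
      have h := mul_le_mul_of_nonneg_right h3
        (le_of_lt (mul_pos hα (by positivity : (0:ℝ) < MB ^ 2)))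
      nlinarith
    have e1' := mul_le_mul_of_nonneg_left e1 (mul_pos hc₁ hc2).le
    nlinarith [e1', e2]
  exact le_of_mul_le_mul_right hβmul hβ

/-- Guaranteed decrease `f(x⁺) ≤ f(x) − C‖g‖²` for a quasi-Newton step
with direction `d = −B⁻¹ g` satisfying the Wolfe conditions. -/
theorem stmt6 (N : ℕ) (hN : 1 ≤ N)
    (f : EuclideanSpace ℝ (Fin N) → ℝ) (hf : Differentiable ℝ f)
    (L : ℝ) (hL : 0 < L)
    (hlip : ∀ x y, ‖gradient f x - gradient f y‖ ≤ L * ‖x - y‖)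
    (mB MB : ℝ) (hmB : 0 < mB) (hmM : mB ≤ MB)
    (c₁ c₂ : ℝ) (hc₁0 : 0 < c₁) (hc₁half : c₁ < 1 / 2) (hc₁₂ : c₁ < c₂) (hc₂1 : c₂ < 1)
    (x : EuclideanSpace ℝ (Fin N)) (hg : gradient f x ≠ 0)
    (B : Matrix (Fin N) (Fin N) ℝ) (hB : B.IsHermitian)
    (heig : ∀ i, hB.eigenvalues i ∈ Set.Icc mB MB)
    (d : EuclideanSpace ℝ (Fin N))
    (hd : d = -((Matrix.toEuclideanLin (B⁻¹)) (gradient f x)))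
    (γ : ℝ) (hγ : 0 < γ)
    (harmijo : f (x + γ • d) ≤ f x + c₁ * γ * ⟪gradient f x, d⟫)
    (hcurv : ⟪gradient f (x + γ • d), d⟫ ≥ c₂ * ⟪gradient f x, d⟫) :
    f (x + γ • d) ≤ f x - (c₁ * (1 - c₂) * mB ^ 2 / (L * MB ^ 2)) * ‖gradient f x‖ ^ 2 := by
  set g := gradient f x with hgdef
  set u : EuclideanSpace ℝ (Fin N) := Matrix.toEuclideanLin B⁻¹ g with hudef
  have hMB : 0 < MB := lt_of_lt_of_le hmB hmM
  -- B is invertible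
  have hdet : IsUnit B.det := by
    rw [hB.det_eq_prod_eigenvalues, isUnit_iff_ne_zero]
    refine Finset.prod_ne_zero_iff.mpr fun i _ => ?_
    have h := (heig i).1
    simp only [RCLike.ofReal_real_eq_id, id_eq]
    intro h0
    rw [h0] at h; linarith
  -- T u = g
  have hTu : Matrix.toEuclideanLin B u = g := by
    simp [hudef, Matrix.toEuclideanLin_apply, Matrix.mulVec_mulVec,
      Matrix.mul_nonsing_inv _ hdet]
  have hsym : (Matrix.toEuclideanLin B).IsSymmetric :=
    Matrix.isHermitian_iff_isSymmetric.mp hB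
  set V := hB.eigenvectorBasis with hVdef
  set lam := hB.eigenvalues with hlamdef
  have hTV : ∀ j, Matrix.toEuclideanLin B (V j) = lam j • V j := by
    intro j
    have h := hB.mulVec_eigenvectorBasis j
    ext i
    simpa [Matrix.toEuclideanLin_apply] using congrFun h i
  -- pointwise inner products
  have hTuV : ∀ i, ⟪Matrix.toEuclideanLin B u, V i⟫ = lam i * ⟪u, V i⟫ := by
    intro i
    rw [hsym u (V i), hTV i, real_inner_smul_right]
  have hVTu : ∀ i, ⟪V i, Matrix.toEuclideanLin B u⟫ = lam i * ⟪u, V i⟫ := by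
    intro i
    rw [real_inner_comm (Matrix.toEuclideanLin B u) (V i), hTuV i]
  -- spectral expansions
  have hβ : ⟪u, u⟫ = ∑ i, ⟪u, V i⟫ * ⟪u, V i⟫ := by
    rw [← V.sum_inner_mul_inner u u]
    exact Finset.sum_congr rfl fun i _ => by rw [real_inner_comm (V i) u]
  have hα : ⟪g, u⟫ = ∑ i, lam i * (⟪u, V i⟫ * ⟪u, V i⟫) := by
    rw [← hTu, ← V.sum_inner_mul_inner]
    refine Finset.sum_congr rfl fun i _ => ?_
    rw [hTuV i, real_inner_comm (V i) u]
    ring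
  have hgg : ⟪g, g⟫ = ∑ i, (lam i * ⟪u, V i⟫) * (lam i * ⟪u, V i⟫) := by
    rw [← hTu, ← V.sum_inner_mul_inner]
    exact Finset.sum_congr rfl fun i _ => by rw [hTuV i, hVTu i]
  -- notation
  set α := (⟪g, u⟫ : ℝ) with hαdef
  set β := (⟪u, u⟫ : ℝ) with hβdef
  have hu0 : u ≠ 0 := by
    intro h
    apply hg
    rw [← hTu, h, map_zero]
  have hβpos : 0 < β := by
    rw [hβdef, real_inner_self_eq_norm_sq]
    exact pow_pos (norm_pos_iff.mpr hu0) 2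
  have hmαβ : mB * β ≤ α := by
    rw [hα, hβ, Finset.mul_sum]
    refine Finset.sum_le_sum fun i _ => ?_
    have h := (heig i).1
    nlinarith [mul_self_nonneg (⟪u, V i⟫ : ℝ)]
  have hαpos : 0 < α := lt_of_lt_of_le (mul_pos hmB hβpos) hmαβ
  have hgMα : ‖g‖ ^ 2 ≤ MB * α := by
    rw [← real_inner_self_eq_norm_sq, hgg, hα, Finset.mul_sum]
    refine Finset.sum_le_sum fun i _ => ?_
    have h1 := (heig i).1
    have h2 := (heig i).2
    nlinarith [mul_self_nonneg (⟪u, V i⟫ : ℝ)]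
  -- inner products with d
  have hgd : ⟪g, d⟫ = -α := by rw [hd, inner_neg_right]
  have hdd : ‖d‖ = ‖u‖ := by rw [hd, norm_neg]
  have hnu : ‖u‖ ^ 2 = β := (real_inner_self_eq_norm_sq u).symm
  -- curvature + Lipschitz ⇒ lower bound on γ
  have hstep : (1 - c₂) * α ≤ L * γ * β := by
    have h1 : (1 - c₂) * α ≤ ⟪gradient f (x + γ • d) - g, d⟫ := by
      rw [inner_sub_left, hgd]
      have hc := hcurv
      rw [hgd] at hc
      linarith
    have h2 : ⟪gradient f (x + γ • d) - g, d⟫ ≤ L * γ * β := by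
      calc ⟪gradient f (x + γ • d) - g, d⟫ ≤ ‖gradient f (x + γ • d) - g‖ * ‖d‖ :=
            real_inner_le_norm _ _
        _ ≤ (L * ‖(x + γ • d) - x‖) * ‖d‖ :=
            mul_le_mul_of_nonneg_right (hlip (x + γ • d) x) (norm_nonneg d)
        _ = L * γ * β := by
            rw [add_sub_cancel_left, norm_smul, hdd, Real.norm_eq_abs, abs_of_pos hγ, ← hnu]
            ring
    linarith
  -- final arithmetic
  have hkey : c₁ * (1 - c₂) * mB ^ 2 / (L * MB ^ 2) * ‖g‖ ^ 2 ≤ c₁ * γ * α :=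
    stmt6_aux L mB MB c₁ c₂ γ α β (‖g‖ ^ 2) hL hmB hmM hc₁0 hc₂1 hγ hβpos hαpos
      hmαβ hgMα hstep (by positivity)
  calc f (x + γ • d) ≤ f x + c₁ * γ * ⟪g, d⟫ := harmijo
    _ = f x - c₁ * γ * α := by rw [hgd]; ring
    _ ≤ f x - c₁ * (1 - c₂) * mB ^ 2 / (L * MB ^ 2) * ‖g‖ ^ 2 := by linarith
end

section
/- The reduced dual objective f : ℝ^{n+m−1} → ℝ defined by f(x) = −L(α, β) for x = (α, β_{−m}) with β_m = 0, i.e. f(x) = η Σ_{i=1}^n Σ_{j=1}^m exp((α_i + β_j − M_{ij})/η) − α^T a − (β_{−m})^T b_{−m}, is a convex function; in fact it is strictly convex. -/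
/-- The reduced dual objective of entropic-regularized OT (with `β_m = 0`
eliminated, hence domain `ℝ^{n+m−1}` represented as functions on `Fin n ⊕ Fin m`,
where the paper's `m` equals our `m+1`) is convex, and in fact strictly convex. -/
theorem stmt9 (n m : ℕ) (hn : 1 ≤ n) (hm : 1 ≤ m)
    (M : Matrix (Fin n) (Fin (m + 1)) ℝ) (η : ℝ) (hη : 0 < η)
    (a : Fin n → ℝ) (b : Fin (m + 1) → ℝ)
    (ha : ∀ i, 0 < a i) (hb : ∀ j, 0 < b j)
    (hsa : ∑ i, a i = 1) (hsb : ∑ j, b j = 1)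
    (f : (Fin n ⊕ Fin m → ℝ) → ℝ)
    (hf : ∀ x : Fin n ⊕ Fin m → ℝ,
      f x = η * ∑ i, ∑ j, Real.exp
          ((x (Sum.inl i) + Fin.snoc (α := fun _ => ℝ) (fun j' : Fin m => x (Sum.inr j')) 0 j - M i j) / η)
        - ∑ i, x (Sum.inl i) * a i
        - ∑ j : Fin m, x (Sum.inr j) * b (Fin.castSucc j)) :
    ConvexOn ℝ Set.univ f ∧ StrictConvexOn ℝ Set.univ f := by
  set arg : Fin n → Fin (m+1) → (Fin n ⊕ Fin m → ℝ) → ℝ := fun i j x =>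
    (x (Sum.inl i) + Fin.snoc (α := fun _ => ℝ) (fun j' : Fin m => x (Sum.inr j')) 0 j - M i j) / η
    with harg_def
  have hsc : StrictConvexOn ℝ Set.univ f := by
    refine ⟨convex_univ, fun x _ y _ hxy t s ht hs hts => ?_⟩
    have haff : ∀ i j, arg i j (t • x + s • y) = t * arg i j x + s * arg i j y := by
      intro i j
      induction j using Fin.lastCases with
      | last =>
        simp only [harg_def, Fin.snoc_last, Pi.add_apply, Pi.smul_apply, smul_eq_mul]
        field_simp
        linear_combination (M i (Fin.last m)) * hts
      | cast j =>
        simp only [harg_def, Fin.snoc_castSucc, Pi.add_apply, Pi.smul_apply, smul_eq_mul]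
        field_simp
        linear_combination (M i (Fin.castSucc j)) * hts
    -- exponential sum comparison
    have key : ∑ i, ∑ j, Real.exp (arg i j (t • x + s • y))
        < t * (∑ i, ∑ j, Real.exp (arg i j x)) + s * (∑ i, ∑ j, Real.exp (arg i j y)) := by
      have hle : ∀ i j, Real.exp (arg i j (t • x + s • y))
          ≤ t * Real.exp (arg i j x) + s * Real.exp (arg i j y) := by
        intro i j
        rw [haff i j]
        simpa using convexOn_exp.2 (Set.mem_univ (arg i j x)) (Set.mem_univ (arg i j y))
          ht.le hs.le hts
      have hstrict : ∃ i j, Real.exp (arg i j (t • x + s • y))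
          < t * Real.exp (arg i j x) + s * Real.exp (arg i j y) := by
        have hexp : ∀ i j, arg i j x ≠ arg i j y →
            Real.exp (arg i j (t • x + s • y))
              < t * Real.exp (arg i j x) + s * Real.exp (arg i j y) := by
          intro i j hne
          rw [haff i j]
          simpa using strictConvexOn_exp.2 (Set.mem_univ (arg i j x)) (Set.mem_univ (arg i j y))
            hne ht hs hts
        by_cases hA : ∃ i, x (Sum.inl i) ≠ y (Sum.inl i)
        · obtain ⟨i, hi⟩ := hA
          refine ⟨i, Fin.last m, hexp _ _ ?_⟩
          simp only [harg_def, Fin.snoc_last]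
          intro h
          rw [div_eq_div_iff hη.ne' hη.ne'] at h
          have := mul_right_cancel₀ hη.ne' h
          apply hi; linarith
        · push_neg at hA
          have hB : ∃ j, x (Sum.inr j) ≠ y (Sum.inr j) := by
            by_contra hB
            push_neg at hB
            apply hxy
            funext k
            cases k with
            | inl i => exact hA i
            | inr j => exact hB j
          obtain ⟨j, hj⟩ := hB
          refine ⟨⟨0, hn⟩, Fin.castSucc j, hexp _ _ ?_⟩
          simp only [harg_def, Fin.snoc_castSucc]
          intro h
          rw [div_eq_div_iff hη.ne' hη.ne'] at h
          have := mul_right_cancel₀ hη.ne' h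
          apply hj
          have := hA ⟨0, hn⟩
          linarith
      obtain ⟨i0, j0, hij⟩ := hstrict
      calc ∑ i, ∑ j, Real.exp (arg i j (t • x + s • y))
          < ∑ i, ∑ j, (t * Real.exp (arg i j x) + s * Real.exp (arg i j y)) := by
            refine Finset.sum_lt_sum (fun i _ => Finset.sum_le_sum fun j _ => hle i j) ⟨i0, Finset.mem_univ _, ?_⟩
            exact Finset.sum_lt_sum (fun j _ => hle i0 j) ⟨j0, Finset.mem_univ _, hij⟩
        _ = t * (∑ i, ∑ j, Real.exp (arg i j x)) + s * (∑ i, ∑ j, Real.exp (arg i j y)) := by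
            simp [Finset.sum_add_distrib, Finset.mul_sum]
    -- linear parts
    have hlin1 : ∑ i, (t • x + s • y) (Sum.inl i) * a i
        = t * ∑ i, x (Sum.inl i) * a i + s * ∑ i, y (Sum.inl i) * a i := by
      simp only [Pi.add_apply, Pi.smul_apply, smul_eq_mul, add_mul, Finset.sum_add_distrib,
        Finset.mul_sum, mul_assoc]
    have hlin2 : ∑ j : Fin m, (t • x + s • y) (Sum.inr j) * b (Fin.castSucc j)
        = t * ∑ j : Fin m, x (Sum.inr j) * b (Fin.castSucc j)
          + s * ∑ j : Fin m, y (Sum.inr j) * b (Fin.castSucc j) := by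
      simp only [Pi.add_apply, Pi.smul_apply, smul_eq_mul, add_mul, Finset.sum_add_distrib,
        Finset.mul_sum, mul_assoc]
    rw [hf, hf, hf]
    simp only [smul_eq_mul]
    rw [hlin1, hlin2]
    nlinarith [mul_lt_mul_of_pos_left key hη]
  exact ⟨hsc.convexOn, hsc⟩
end

section
/- The reduced dual objective f : ℝ^{n+m−1} → ℝ, f(x) = η Σ_{i=1}^n Σ_{j=1}^m exp((α_i + β_j − M_{ij})/η) − α^T a − (β_{−m})^T b_{−m} for x = (α, β_{−m}) with β_m = 0, is differentiable, and its gradient is given in closed form by ∇f(x) = (T 1_m − a, (T_{−m})^T 1_n − b_{−m}), where T is the matrix with entries T_{ij} = exp((α_i + β_j − M_{ij})/η), T_{−m} denotes T with its m-th column removed, and 1_k is the all-ones vector in ℝ^k. -/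
/-!
Each exponential summand is `η · exp((ℓ x − c)/η)` for a continuous linear functional `ℓ`
(namely `α_i + β_j`; setting `β_m = 0` keeps `x ↦ β_j` linear), whose derivative is
`exp((ℓ x − c)/η) • ℓ`. Hence `f` has derivative `Σ T_ij (α_i + β_j) − aᵀα − b_{−m}ᵀβ_{−m}`
as a linear functional, and the gradient coordinates are its values on the standard basis.
-/

open Finset

theorem EuclideanSpace.gradient_apply {ι : Type*} [Fintype ι] [DecidableEq ι]
    (f : EuclideanSpace ℝ ι → ℝ) (x : EuclideanSpace ℝ ι) (k : ι) :
    gradient f x k = fderiv ℝ f x (EuclideanSpace.single k 1) := by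
  rw [← InnerProductSpace.toDual_symm_apply, EuclideanSpace.inner_single_right]
  simp [gradient]

theorem hasFDerivAt_mul_exp_sub_div {E : Type*} [NormedAddCommGroup E] [NormedSpace ℝ E]
    (ℓ : E →L[ℝ] ℝ) (c : ℝ) {η : ℝ} (hη : η ≠ 0) (x : E) :
    HasFDerivAt (fun y => η * Real.exp ((ℓ y - c) / η)) (Real.exp ((ℓ x - c) / η) • ℓ) x := by
  have h := (((ℓ.hasFDerivAt (x := x)).sub_const c).mul_const η⁻¹).exp.const_mul η
  simpa only [← div_eq_mul_inv, smul_comm η, smul_smul, div_mul_cancel₀ _ hη] using h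

namespace ReducedDual

variable {n m : ℕ}

/-- The coordinate `β_j` of `x = (α, β_{-m})`, with the convention `β_m = 0`. -/
noncomputable def betaCoord (j : Fin (m + 1)) : EuclideanSpace ℝ (Fin n ⊕ Fin m) →L[ℝ] ℝ :=
  Fin.lastCases 0 (fun j' => EuclideanSpace.proj (Sum.inr j')) j

theorem betaCoord_apply (j : Fin (m + 1)) (x : EuclideanSpace ℝ (Fin n ⊕ Fin m)) :
    betaCoord j x = Fin.snoc (α := fun _ => ℝ) (fun j' : Fin m => x (Sum.inr j')) 0 j := by
  induction j using Fin.lastCases <;> simp [betaCoord]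

theorem betaCoord_single_inl (j : Fin (m + 1)) (i : Fin n) :
    betaCoord j (EuclideanSpace.single (Sum.inl i) 1 : EuclideanSpace ℝ (Fin n ⊕ Fin m)) = 0 := by
  induction j using Fin.lastCases <;> simp [betaCoord]

theorem betaCoord_single_inr (j : Fin (m + 1)) (k : Fin m) :
    betaCoord j (EuclideanSpace.single (Sum.inr k) 1 : EuclideanSpace ℝ (Fin n ⊕ Fin m)) =
      if j = k.castSucc then 1 else 0 := by
  induction j using Fin.lastCases with
  | last => simp [betaCoord, (Fin.castSucc_lt_last k).ne']
  | cast j => simp [betaCoord, eq_comm]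

variable (M : Matrix (Fin n) (Fin (m + 1)) ℝ) (η : ℝ) (a : Fin n → ℝ) (b : Fin (m + 1) → ℝ)

/-- The matrix `T` of the paper at `x = (α, β_{-m})`. -/
noncomputable def plan (x : EuclideanSpace ℝ (Fin n ⊕ Fin m)) (i : Fin n) (j : Fin (m + 1)) : ℝ :=
  Real.exp ((x (Sum.inl i) + Fin.snoc (α := fun _ => ℝ) (fun j' : Fin m => x (Sum.inr j')) 0 j
    - M i j) / η)

noncomputable def objective (x : EuclideanSpace ℝ (Fin n ⊕ Fin m)) : ℝ :=
  η * ∑ i, ∑ j, plan M η x i j - ∑ i, x (Sum.inl i) * a i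
    - ∑ j : Fin m, x (Sum.inr j) * b j.castSucc

theorem plan_eq (x : EuclideanSpace ℝ (Fin n ⊕ Fin m)) (i : Fin n) (j : Fin (m + 1)) :
    plan M η x i j =
      Real.exp (((EuclideanSpace.proj (Sum.inl i) + betaCoord j :
        EuclideanSpace ℝ (Fin n ⊕ Fin m) →L[ℝ] ℝ) x - M i j) / η) := by
  simp [plan, betaCoord_apply]

variable {η}

theorem hasFDerivAt_objective (hη : η ≠ 0) (x : EuclideanSpace ℝ (Fin n ⊕ Fin m)) :
    HasFDerivAt (objective M η a b)
      (∑ i, ∑ j, plan M η x i j • (EuclideanSpace.proj (Sum.inl i) + betaCoord j)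
        - ∑ i, a i • EuclideanSpace.proj (Sum.inl i)
        - ∑ j : Fin m, b j.castSucc • EuclideanSpace.proj (Sum.inr j)) x := by
  have hexp : HasFDerivAt (fun y => η * ∑ i, ∑ j, plan M η y i j)
      (∑ i, ∑ j, plan M η x i j • (EuclideanSpace.proj (Sum.inl i) + betaCoord j)) x := by
    simp only [plan_eq, mul_sum]
    exact .fun_sum fun i _ => .fun_sum fun j _ => hasFDerivAt_mul_exp_sub_div _ _ hη x
  exact (hexp.sub (.fun_sum fun i _ =>
      (EuclideanSpace.proj (𝕜 := ℝ) (Sum.inl i)).hasFDerivAt.mul_const (a i))).sub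
    (.fun_sum fun j _ =>
      (EuclideanSpace.proj (𝕜 := ℝ) (Sum.inr j)).hasFDerivAt.mul_const (b j.castSucc))

theorem gradient_objective_inl (hη : η ≠ 0) (x : EuclideanSpace ℝ (Fin n ⊕ Fin m)) (i : Fin n) :
    gradient (objective M η a b) x (Sum.inl i) = ∑ j, plan M η x i j - a i := by
  rw [EuclideanSpace.gradient_apply, (hasFDerivAt_objective M a b hη x).fderiv]
  simp [betaCoord_single_inl]

theorem gradient_objective_inr (hη : η ≠ 0) (x : EuclideanSpace ℝ (Fin n ⊕ Fin m)) (j : Fin m) :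
    gradient (objective M η a b) x (Sum.inr j) = ∑ i, plan M η x i j.castSucc - b j.castSucc := by
  rw [EuclideanSpace.gradient_apply, (hasFDerivAt_objective M a b hη x).fderiv]
  simp [betaCoord_single_inr]

end ReducedDual

theorem stmt10_general (n m : ℕ)
    (M : Matrix (Fin n) (Fin (m + 1)) ℝ) (η : ℝ) (hη : 0 < η)
    (a : Fin n → ℝ) (b : Fin (m + 1) → ℝ)
    (f : EuclideanSpace ℝ (Fin n ⊕ Fin m) → ℝ)
    (hf : ∀ x : EuclideanSpace ℝ (Fin n ⊕ Fin m),
      f x = η * ∑ i, ∑ j, Real.exp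
          ((x (Sum.inl i) + Fin.snoc (α := fun _ => ℝ) (fun j' : Fin m => x (Sum.inr j')) 0 j
            - M i j) / η)
        - ∑ i, x (Sum.inl i) * a i
        - ∑ j : Fin m, x (Sum.inr j) * b (Fin.castSucc j)) :
    Differentiable ℝ f ∧
    ∀ x : EuclideanSpace ℝ (Fin n ⊕ Fin m),
      (∀ i : Fin n, gradient f x (Sum.inl i) =
        (∑ j, Real.exp
          ((x (Sum.inl i) + Fin.snoc (α := fun _ => ℝ) (fun j' : Fin m => x (Sum.inr j')) 0 j
            - M i j) / η)) - a i) ∧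
      (∀ j : Fin m, gradient f x (Sum.inr j) =
        (∑ i, Real.exp
          ((x (Sum.inl i) + Fin.snoc (α := fun _ => ℝ) (fun j' : Fin m => x (Sum.inr j')) 0
              (Fin.castSucc j) - M i (Fin.castSucc j)) / η)) - b (Fin.castSucc j)) := by
  obtain rfl : f = ReducedDual.objective M η a b := funext hf
  refine ⟨fun x => (ReducedDual.hasFDerivAt_objective M a b hη.ne' x).differentiableAt,
    fun x => ⟨fun i => ?_, fun j => ?_⟩⟩
  · exact ReducedDual.gradient_objective_inl M a b hη.ne' x i
  · exact ReducedDual.gradient_objective_inr M a b hη.ne' x j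

/-- The reduced dual objective is differentiable, with gradient
`∇f(x) = (T 1_m − a, (T_{−m})^T 1_n − b_{−m})` (the paper's `m` equals our `m+1`,
and the domain `ℝ^{n+m−1}` is represented as `EuclideanSpace ℝ (Fin n ⊕ Fin m)`). -/
theorem stmt10 (n m : ℕ) (hn : 1 ≤ n) (hm : 1 ≤ m)
    (M : Matrix (Fin n) (Fin (m + 1)) ℝ) (η : ℝ) (hη : 0 < η)
    (a : Fin n → ℝ) (b : Fin (m + 1) → ℝ)
    (ha : ∀ i, 0 < a i) (hb : ∀ j, 0 < b j)
    (hsa : ∑ i, a i = 1) (hsb : ∑ j, b j = 1)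
    (f : EuclideanSpace ℝ (Fin n ⊕ Fin m) → ℝ)
    (hf : ∀ x : EuclideanSpace ℝ (Fin n ⊕ Fin m),
      f x = η * ∑ i, ∑ j, Real.exp
          ((x (Sum.inl i) + Fin.snoc (α := fun _ => ℝ) (fun j' : Fin m => x (Sum.inr j')) 0 j
            - M i j) / η)
        - ∑ i, x (Sum.inl i) * a i
        - ∑ j : Fin m, x (Sum.inr j) * b (Fin.castSucc j)) :
    Differentiable ℝ f ∧
    ∀ x : EuclideanSpace ℝ (Fin n ⊕ Fin m),
      (∀ i : Fin n, gradient f x (Sum.inl i) =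
        (∑ j, Real.exp
          ((x (Sum.inl i) + Fin.snoc (α := fun _ => ℝ) (fun j' : Fin m => x (Sum.inr j')) 0 j
            - M i j) / η)) - a i) ∧
      (∀ j : Fin m, gradient f x (Sum.inr j) =
        (∑ i, Real.exp
          ((x (Sum.inl i) + Fin.snoc (α := fun _ => ℝ) (fun j' : Fin m => x (Sum.inr j')) 0
              (Fin.castSucc j) - M i (Fin.castSucc j)) / η)) - b (Fin.castSucc j)) :=
  stmt10_general n m M η hη a b f hf
end

section
/- The reduced dual objective f : ℝ^{n+m−1} → ℝ, f(x) = η Σ_{i=1}^n Σ_{j=1}^m exp((α_i + β_j − M_{ij})/η) − α^T a − (β_{−m})^T b_{−m} for x = (α, β_{−m}) with β_m = 0, is twice differentiable, and its Hessian at x equals the block matrix ∇²f(x) = η⁻¹ [diag(T 1_m), T_{−m}; (T_{−m})^T, diag((T_{−m})^T 1_n)], where T has entries T_{ij} = exp((α_i + β_j − M_{ij})/η), T_{−m} denotes T with its m-th column removed, and 1_k is the all-ones vector in ℝ^k. -/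
/-!
Write `ℓ_{ij}(x) = α_i + β_j` (with `β_m = 0`), a continuous linear functional on the
domain. Then `f = η ∑ exp ((ℓ_{ij} - M_{ij}) / η) - ψ` with `ψ` linear, so
`∇f(x) = ∑ T_{ij} ∇ℓ_{ij} - ∇ψ` and `D(∇f)(x) = η⁻¹ ∑ T_{ij} ∇ℓ_{ij} ⊗ ∇ℓ_{ij}`.
Since `∇ℓ_{ij} = e_{α_i} + e_{β_j}` (just `e_{α_i}` when `j = m`), the entry `(p, q)` of this
sum collects exactly the blocks `diag(T 1)`, `T_{-m}`, `T_{-m}ᵀ`, `diag(T_{-m}ᵀ 1)`.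
-/

open InnerProductSpace Real

section ExpSum

variable {E ι : Type*} [NormedAddCommGroup E] [InnerProductSpace ℝ E]
  (φ : ι → StrongDual ℝ E) (c : ι → ℝ) (η : ℝ)

theorem hasFDerivAt_exp_affine_div (k : ι) (x : E) :
    HasFDerivAt (fun z => exp ((φ k z - c k) / η))
      ((exp ((φ k x - c k) / η) / η) • φ k) x := by
  have hlin : HasFDerivAt (fun z => (φ k z - c k) / η) (η⁻¹ • φ k) x := by
    simpa only [div_eq_mul_inv] using ((φ k).hasFDerivAt.sub_const (c k)).mul_const η⁻¹
  simpa only [smul_smul, div_eq_mul_inv] using hlin.exp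

theorem hasGradientAt_mul_sum_exp_sub [Fintype ι] [CompleteSpace E] (hη : η ≠ 0)
    (ψ : StrongDual ℝ E) (x : E) :
    HasGradientAt (fun z => η * ∑ k, exp ((φ k z - c k) / η) - ψ z)
      (∑ k, exp ((φ k x - c k) / η) • (toDual ℝ E).symm (φ k) - (toDual ℝ E).symm ψ) x := by
  rw [hasGradientAt_iff_hasFDerivAt]
  refine (((HasFDerivAt.fun_sum fun k _ => hasFDerivAt_exp_affine_div φ c η k x).const_mul
    η).fun_sub ψ.hasFDerivAt).congr_fderiv ?_
  simp only [map_sub, map_sum, map_smul, LinearIsometryEquiv.apply_symm_apply, Finset.smul_sum,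
    smul_smul, mul_div_cancel₀ _ hη]

theorem hasFDerivAt_sum_exp_smul_sub [Fintype ι] (v : ι → E) (u x : E) :
    HasFDerivAt (fun z => ∑ k, exp ((φ k z - c k) / η) • v k - u)
      (∑ k, ((exp ((φ k x - c k) / η) / η) • φ k).smulRight (v k)) x :=
  (HasFDerivAt.fun_sum fun k _ =>
    (hasFDerivAt_exp_affine_div φ c η k x).smul_const (v k)).sub_const u

end ExpSum

theorem EuclideanSpace.toDual_symm_apply {κ : Type*} [Fintype κ] [DecidableEq κ]
    (φ : StrongDual ℝ (EuclideanSpace ℝ κ)) (p : κ) :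
    (toDual ℝ (EuclideanSpace ℝ κ)).symm φ p = φ (EuclideanSpace.single p 1) := by
  rw [← InnerProductSpace.toDual_symm_apply, real_inner_comm, EuclideanSpace.inner_single_left]
  simp

theorem EuclideanSpace.sum_smulRight_toDual_symm_single_apply {κ ι : Type*} [Fintype κ]
    [DecidableEq κ] [Fintype ι] (t : ι → ℝ) (φ : ι → StrongDual ℝ (EuclideanSpace ℝ κ))
    (p q : κ) :
    (∑ k, (t k • φ k).smulRight ((toDual ℝ (EuclideanSpace ℝ κ)).symm (φ k)))
        (EuclideanSpace.single q 1) p =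
      ∑ k, t k * φ k (EuclideanSpace.single q 1) * φ k (EuclideanSpace.single p 1) := by
  simp [WithLp.ofLp_sum, EuclideanSpace.toDual_symm_apply, mul_assoc]

namespace ReducedDual

open Matrix

variable {n m : ℕ}

/-- `β_j` under the normalisation `β_m = 0`; the paper's `m` is `m + 1` here, its last index
`Fin.last m`. -/
noncomputable def extendedBeta (j : Fin (m + 1)) :
    StrongDual ℝ (EuclideanSpace ℝ (Fin n ⊕ Fin m)) :=
  Fin.lastCases 0 (fun j' => EuclideanSpace.proj (Sum.inr j')) j

noncomputable def potential (i : Fin n) (j : Fin (m + 1)) :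
    StrongDual ℝ (EuclideanSpace ℝ (Fin n ⊕ Fin m)) :=
  EuclideanSpace.proj (Sum.inl i) + extendedBeta j

noncomputable def marginalPairing (a : Fin n → ℝ) (b : Fin (m + 1) → ℝ) :
    StrongDual ℝ (EuclideanSpace ℝ (Fin n ⊕ Fin m)) :=
  ∑ i, a i • EuclideanSpace.proj (Sum.inl i) +
    ∑ j, b (Fin.castSucc j) • EuclideanSpace.proj (Sum.inr j)

theorem extendedBeta_apply (j : Fin (m + 1)) (x : EuclideanSpace ℝ (Fin n ⊕ Fin m)) :
    extendedBeta j x =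
      Fin.snoc (α := fun _ => ℝ) (fun j' : Fin m => x (Sum.inr j')) 0 j := by
  induction j using Fin.lastCases <;> simp [extendedBeta]

theorem potential_apply (i : Fin n) (j : Fin (m + 1)) (x : EuclideanSpace ℝ (Fin n ⊕ Fin m)) :
    potential i j x =
      x (Sum.inl i) + Fin.snoc (α := fun _ => ℝ) (fun j' : Fin m => x (Sum.inr j')) 0 j := by
  simp [potential, extendedBeta_apply]

theorem marginalPairing_apply (a : Fin n → ℝ) (b : Fin (m + 1) → ℝ)
    (x : EuclideanSpace ℝ (Fin n ⊕ Fin m)) :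
    marginalPairing a b x =
      ∑ i, x (Sum.inl i) * a i + ∑ j : Fin m, x (Sum.inr j) * b (Fin.castSucc j) := by
  simp [marginalPairing, mul_comm]

theorem potential_single_inl (i i' : Fin n) (j : Fin (m + 1)) :
    potential i j (EuclideanSpace.single (Sum.inl i') 1) = if i = i' then 1 else 0 := by
  induction j using Fin.lastCases <;> simp [potential, extendedBeta, eq_comm]

theorem potential_single_inr (i : Fin n) (j : Fin (m + 1)) (j' : Fin m) :
    potential i j (EuclideanSpace.single (Sum.inr j') 1) =
      if j = Fin.castSucc j' then 1 else 0 := by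
  induction j using Fin.lastCases <;>
    simp [potential, extendedBeta, (Fin.castSucc_lt_last _).ne', eq_comm]

theorem sum_mul_potential_single_mul_potential_single (T : Matrix (Fin n) (Fin (m + 1)) ℝ)
    (p q : Fin n ⊕ Fin m) :
    ∑ i, ∑ j, T i j * potential i j (EuclideanSpace.single q 1) *
        potential i j (EuclideanSpace.single p 1) =
      fromBlocks (diagonal fun i => ∑ j, T i j) (of fun i j => T i (Fin.castSucc j))
        (of fun i j => T i (Fin.castSucc j))ᵀ
        (diagonal fun j => ∑ i, T i (Fin.castSucc j)) p q := by
  rcases p with i | j <;> rcases q with i' | j' <;>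
    simp [potential_single_inl, potential_single_inr, diagonal_apply, Finset.sum_ite_eq', mul_ite]

end ReducedDual

open Matrix in
theorem stmt11_general (n m : ℕ)
    (M : Matrix (Fin n) (Fin (m + 1)) ℝ) (η : ℝ) (hη : 0 < η)
    (a : Fin n → ℝ) (b : Fin (m + 1) → ℝ)
    (f : EuclideanSpace ℝ (Fin n ⊕ Fin m) → ℝ)
    (hf : ∀ x : EuclideanSpace ℝ (Fin n ⊕ Fin m),
      f x = η * ∑ i, ∑ j, Real.exp
          ((x (Sum.inl i) + Fin.snoc (α := fun _ => ℝ) (fun j' : Fin m => x (Sum.inr j')) 0 j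
            - M i j) / η)
        - ∑ i, x (Sum.inl i) * a i
        - ∑ j : Fin m, x (Sum.inr j) * b (Fin.castSucc j)) :
    Differentiable ℝ f ∧
    Differentiable ℝ (fun z => gradient f z) ∧
    ∀ x : EuclideanSpace ℝ (Fin n ⊕ Fin m),
      let T : Matrix (Fin n) (Fin (m + 1)) ℝ := Matrix.of fun i j => Real.exp
        ((x (Sum.inl i) + Fin.snoc (α := fun _ => ℝ) (fun j' : Fin m => x (Sum.inr j')) 0 j
          - M i j) / η)
      let Tm : Matrix (Fin n) (Fin m) ℝ := Matrix.of fun i j => T i (Fin.castSucc j)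
      ∀ p q : Fin n ⊕ Fin m,
        fderiv ℝ (fun z => gradient f z) x (EuclideanSpace.single q 1) p =
          (η⁻¹ • Matrix.fromBlocks
            (Matrix.diagonal fun i => ∑ j, T i j) Tm
            Tmᵀ (Matrix.diagonal fun j => ∑ i, Tm i j)) p q := by
  set φ : Fin n × Fin (m + 1) → StrongDual ℝ (EuclideanSpace ℝ (Fin n ⊕ Fin m)) :=
    fun k => ReducedDual.potential k.1 k.2
  have hf_eq : f = fun z =>
      η * ∑ k, Real.exp ((φ k z - M k.1 k.2) / η) - ReducedDual.marginalPairing a b z := by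
    funext z
    rw [hf, ReducedDual.marginalPairing_apply, Fintype.sum_prod_type]
    simp only [φ, ReducedDual.potential_apply]
    ring
  have hgrad := hasGradientAt_mul_sum_exp_sub φ (fun k => M k.1 k.2) η hη.ne'
    (ReducedDual.marginalPairing a b)
  rw [← hf_eq] at hgrad
  have hHess := hasFDerivAt_sum_exp_smul_sub φ (fun k => M k.1 k.2) η
    (fun k => (toDual ℝ _).symm (φ k)) ((toDual ℝ _).symm (ReducedDual.marginalPairing a b))
  simp only [← (hgrad _).gradient] at hHess
  refine ⟨fun x => (hgrad x).differentiableAt, fun x => (hHess x).differentiableAt, ?_⟩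
  intro x T Tm p q
  simp only [Tm, Matrix.of_apply]
  rw [(hHess x).fderiv, EuclideanSpace.sum_smulRight_toDual_symm_single_apply,
    Fintype.sum_prod_type, Matrix.smul_apply,
    ← ReducedDual.sum_mul_potential_single_mul_potential_single, smul_eq_mul, Finset.mul_sum]
  refine Finset.sum_congr rfl fun i _ => ?_
  rw [Finset.mul_sum]
  refine Finset.sum_congr rfl fun j _ => ?_
  simp only [φ, T, Matrix.of_apply, ReducedDual.potential_apply]
  ring

open Matrix in
/-- The reduced dual objective is twice differentiable, and its Hessian
at `x` equals the block matrix
`η⁻¹ [diag(T 1_m), T_{−m}; (T_{−m})^T, diag((T_{−m})^T 1_n)]`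
(the paper's `m` equals our `m+1`; the domain `ℝ^{n+m−1}` is
`EuclideanSpace ℝ (Fin n ⊕ Fin m)`, and the Hessian entry at `(p, q)` is the
`p`-coordinate of the derivative of the gradient in the direction of the `q`-th
standard basis vector). -/
theorem stmt11 (n m : ℕ) (hn : 1 ≤ n) (hm : 1 ≤ m)
    (M : Matrix (Fin n) (Fin (m + 1)) ℝ) (η : ℝ) (hη : 0 < η)
    (a : Fin n → ℝ) (b : Fin (m + 1) → ℝ)
    (ha : ∀ i, 0 < a i) (hb : ∀ j, 0 < b j)
    (hsa : ∑ i, a i = 1) (hsb : ∑ j, b j = 1)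
    (f : EuclideanSpace ℝ (Fin n ⊕ Fin m) → ℝ)
    (hf : ∀ x : EuclideanSpace ℝ (Fin n ⊕ Fin m),
      f x = η * ∑ i, ∑ j, Real.exp
          ((x (Sum.inl i) + Fin.snoc (α := fun _ => ℝ) (fun j' : Fin m => x (Sum.inr j')) 0 j
            - M i j) / η)
        - ∑ i, x (Sum.inl i) * a i
        - ∑ j : Fin m, x (Sum.inr j) * b (Fin.castSucc j)) :
    Differentiable ℝ f ∧
    Differentiable ℝ (fun z => gradient f z) ∧
    ∀ x : EuclideanSpace ℝ (Fin n ⊕ Fin m),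
      let T : Matrix (Fin n) (Fin (m + 1)) ℝ := Matrix.of fun i j => Real.exp
        ((x (Sum.inl i) + Fin.snoc (α := fun _ => ℝ) (fun j' : Fin m => x (Sum.inr j')) 0 j
          - M i j) / η)
      let Tm : Matrix (Fin n) (Fin m) ℝ := Matrix.of fun i j => T i (Fin.castSucc j)
      ∀ p q : Fin n ⊕ Fin m,
        fderiv ℝ (fun z => gradient f z) x (EuclideanSpace.single q 1) p =
          (η⁻¹ • Matrix.fromBlocks
            (Matrix.diagonal fun i => ∑ j, T i j) Tm
            Tmᵀ (Matrix.diagonal fun j => ∑ i, Tm i j)) p q :=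
  stmt11_general n m M η hη a b f hf
end

section
/- For every x₀ ∈ ℝ^{n+m−1}, the sublevel set 𝖫 = {x ∈ ℝ^{n+m−1} : f(x) ≤ f(x₀)} of the reduced dual objective f(x) = η Σ_{i=1}^n Σ_{j=1}^m exp((α_i + β_j − M_{ij})/η) − α^T a − (β_{−m})^T b_{−m} (where x = (α, β_{−m}) and β_m = 0) is a convex and compact subset of ℝ^{n+m−1}. -/
/-!
With `Σ a = Σ b = 1` and `β_m = 0`, the linear part of the objective equals
`Σ_{i,j} a_i b_j (α_i + β_j)`, so `f x = Σ_{i,j} φ_{ij}(α_i + β_j)` with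
`φ_{ij}(u) = η exp((u - M_{ij})/η) - a_i b_j u`. Each `φ_{ij}` is convex and tends to `+∞` at both
ends of `ℝ`, hence is bounded below; so on a sublevel set of `f` every `α_i + β_j` stays in a
compact interval. The map `x ↦ (α_i + β_j)_{i,j}` is linear and, since `β_m = 0` and `n ≥ 1`,
injective, so it is a closed embedding and the sublevel set is the compact, convex preimage of a
compact, convex set.
-/

open Filter Topology Set Finset

theorem isCompact_setOf_le_of_tendsto_cocompact {X : Type*} [TopologicalSpace X] {φ : X → ℝ}
    (hφ : Continuous φ) (h : Tendsto φ (cocompact X) atTop) (d : ℝ) :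
    IsCompact {x | φ x ≤ d} := by
  obtain ⟨K, hK, hKc⟩ := mem_cocompact.1 (h.eventually (eventually_gt_atTop d))
  refine hK.of_isClosed_subset (isClosed_le hφ continuous_const) fun x (hx : φ x ≤ d) => ?_
  by_contra hxK
  exact (hKc hxK).not_ge hx

theorem isCompact_setOf_sum_apply_le {ι : Type*} [Fintype ι] {φ : ι → ℝ → ℝ}
    (hcont : ∀ k, Continuous (φ k)) (hcoer : ∀ k, Tendsto (φ k) (cocompact ℝ) atTop) (c : ℝ) :
    IsCompact {v : ι → ℝ | ∑ k, φ k (v k) ≤ c} := by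
  classical
  choose u hu using fun k => (hcont k).exists_forall_le (hcoer k)
  have hsub : {v : ι → ℝ | ∑ k, φ k (v k) ≤ c} ⊆
      Set.univ.pi fun k => {t | φ k t ≤ c - ∑ l, φ l (u l) + φ k (u k)} := by
    intro v hv k _
    have hv' := add_sum_erase univ (fun l => φ l (v l)) (mem_univ k)
    have hu' := add_sum_erase univ (fun l => φ l (u l)) (mem_univ k)
    have hle : ∑ l ∈ univ.erase k, φ l (u l) ≤ ∑ l ∈ univ.erase k, φ l (v l) :=
      sum_le_sum fun l _ => hu l (v l)
    simp only [Set.mem_ofPred_eq] at hv ⊢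
    linarith
  refine (isCompact_univ_pi fun k =>
    isCompact_setOf_le_of_tendsto_cocompact (hcont k) (hcoer k) _).of_isClosed_subset ?_ hsub
  exact isClosed_le (continuous_finsetSum _ fun k _ => (hcont k).comp (continuous_apply k))
    continuous_const

theorem convex_setOf_sum_apply_le {ι : Type*} [Fintype ι] {φ : ι → ℝ → ℝ}
    (h : ∀ k, ConvexOn ℝ Set.univ (φ k)) (c : ℝ) :
    Convex ℝ {v : ι → ℝ | ∑ k, φ k (v k) ≤ c} := by
  have hk : ∀ k, ConvexOn ℝ Set.univ fun v : ι → ℝ => φ k (v k) := fun k =>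
    (h k).comp_linearMap (LinearMap.proj (R := ℝ) (φ := fun _ : ι => ℝ) k)
  have hsum := Finset.sum_induction (s := univ) (fun k v => φ k (v k))
    (fun g : (ι → ℝ) → ℝ => ConvexOn ℝ Set.univ g) (fun _ _ => ConvexOn.add)
    (convexOn_const 0 convex_univ) (fun k _ => hk k)
  simpa [Finset.sum_fn] using hsum.convex_le c

theorem tendsto_exp_sub_mul_atTop (w : ℝ) :
    Tendsto (fun t => Real.exp t - w * t) atTop atTop := by
  have h : Tendsto (fun t => 1 - w * (t ^ 1 * Real.exp (-t))) atTop (𝓝 1) := by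
    simpa using
      tendsto_const_nhds.sub ((Real.tendsto_pow_mul_exp_neg_atTop_nhds_zero 1).const_mul w)
  refine (Real.tendsto_exp_atTop.atTop_mul_pos one_pos h).congr fun t => ?_
  rw [pow_one, mul_sub, mul_one, Real.exp_neg]
  field_simp

noncomputable def dualTerm (η μ w u : ℝ) : ℝ := η * Real.exp ((u - μ) / η) - w * u

theorem continuous_dualTerm (η μ w : ℝ) : Continuous (dualTerm η μ w) := by
  unfold dualTerm
  fun_prop

theorem convexOn_dualTerm {η : ℝ} (hη : 0 ≤ η) (μ w : ℝ) :
    ConvexOn ℝ Set.univ (dualTerm η μ w) := by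
  have hexp : ConvexOn ℝ Set.univ fun u : ℝ => Real.exp ((u - μ) / η) := by
    have h := convexOn_exp.comp_affineMap
      (η⁻¹ • AffineMap.id ℝ ℝ + AffineMap.const ℝ ℝ (-μ / η))
    rw [preimage_univ] at h
    refine h.congr fun u _ => ?_
    simp only [Function.comp_apply, AffineMap.coe_add, AffineMap.coe_smul, AffineMap.coe_id,
      AffineMap.coe_const, Pi.add_apply, Pi.smul_apply, id, Function.const_apply, smul_eq_mul]
    ring_nf
  exact (hexp.smul hη).sub ((w • LinearMap.id (R := ℝ) (M := ℝ)).concaveOn convex_univ)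

theorem tendsto_dualTerm_cocompact {η w : ℝ} (hη : 0 < η) (hw : 0 < w) (μ : ℝ) :
    Tendsto (dualTerm η μ w) (cocompact ℝ) atTop := by
  rw [cocompact_eq_atBot_atTop]
  refine Tendsto.sup ?_ ?_
  · refine tendsto_atTop_mono (fun u => ?_) (tendsto_neg_atBot_atTop.const_mul_atTop hw)
    have := Real.exp_pos ((u - μ) / η)
    unfold dualTerm
    nlinarith
  · have hlin : Tendsto (fun u : ℝ => (u - μ) / η) atTop atTop :=
      (tendsto_atTop_add_const_right _ (-μ) tendsto_id).atTop_div_const hη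
    refine (tendsto_atTop_add_const_right _ (-(w * μ))
      (((tendsto_exp_sub_mul_atTop w).comp hlin).const_mul_atTop hη)).congr fun u => ?_
    simp only [dualTerm, Function.comp_apply]
    field_simp
    ring

def potentialSum (n m : ℕ) :
    EuclideanSpace ℝ (Fin n ⊕ Fin m) →ₗ[ℝ] Fin n × Fin (m + 1) → ℝ where
  toFun x p := x (Sum.inl p.1) + Fin.snoc (α := fun _ => ℝ) (fun j => x (Sum.inr j)) 0 p.2
  map_add' x y := by
    ext ⟨i, j⟩
    induction j using Fin.lastCases <;> simp [add_add_add_comm]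
  map_smul' c x := by
    ext ⟨i, j⟩
    induction j using Fin.lastCases <;> simp [mul_add]

theorem ker_potentialSum {n m : ℕ} (hn : 1 ≤ n) : LinearMap.ker (potentialSum n m) = ⊥ := by
  refine LinearMap.ker_eq_bot'.2 fun x hx => ?_
  have hα : ∀ i, x (Sum.inl i) = 0 := fun i => by
    simpa [potentialSum] using congr_fun hx (i, Fin.last m)
  ext (i | j)
  · exact hα i
  · simpa [potentialSum, hα] using congr_fun hx (⟨0, hn⟩, j.castSucc)

theorem sum_sum_mul_mul_add_of_sum_eq_one {ι κ : Type*} [Fintype ι] [Fintype κ] {a α : ι → ℝ} {b β : κ → ℝ}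
    (ha : ∑ i, a i = 1) (hb : ∑ j, b j = 1) :
    ∑ i, ∑ j, a i * b j * (α i + β j) = ∑ i, α i * a i + ∑ j, β j * b j := by
  calc ∑ i, ∑ j, a i * b j * (α i + β j)
      = ∑ i, α i * a i * (∑ j, b j) + ∑ j, β j * b j * (∑ i, a i) := by
        simp only [mul_add, sum_add_distrib, mul_sum]
        rw [sum_comm (f := fun i j => a i * b j * β j)]
        congr 1 <;> exact sum_congr rfl fun _ _ => sum_congr rfl fun _ _ => by ring
    _ = ∑ i, α i * a i + ∑ j, β j * b j := by rw [ha, hb]; simp only [mul_one]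

theorem dualObjective_eq_sum_dualTerm {n m : ℕ} (M : Matrix (Fin n) (Fin (m + 1)) ℝ) (η : ℝ)
    {a : Fin n → ℝ} {b : Fin (m + 1) → ℝ} (hsa : ∑ i, a i = 1) (hsb : ∑ j, b j = 1)
    (x : EuclideanSpace ℝ (Fin n ⊕ Fin m)) :
    η * ∑ i, ∑ j, Real.exp
        ((x (Sum.inl i) + Fin.snoc (α := fun _ => ℝ) (fun j' : Fin m => x (Sum.inr j')) 0 j
          - M i j) / η)
      - ∑ i, x (Sum.inl i) * a i
      - ∑ j : Fin m, x (Sum.inr j) * b (Fin.castSucc j) =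
    ∑ p, dualTerm η (M p.1 p.2) (a p.1 * b p.2) (potentialSum n m x p) := by
  have hlin := sum_sum_mul_mul_add_of_sum_eq_one (α := fun i => x (Sum.inl i))
    (β := Fin.snoc (α := fun _ => ℝ) (fun j : Fin m => x (Sum.inr j)) 0) hsa hsb
  rw [Fin.sum_univ_castSucc
    (fun j => Fin.snoc (α := fun _ => ℝ) (fun j' : Fin m => x (Sum.inr j')) 0 j * b j)] at hlin
  simp only [Fin.snoc_castSucc, Fin.snoc_last, zero_mul, add_zero] at hlin
  simp only [dualTerm, potentialSum, LinearMap.coe_mk, AddHom.coe_mk, Fintype.sum_prod_type,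
    sum_sub_distrib, mul_sum]
  rw [hlin]
  ring

/-- The paper's `m` is our `m + 1`, and its `ℝ^{n+m−1}` is `EuclideanSpace ℝ (Fin n ⊕ Fin m)`. -/
theorem stmt12_general (n m : ℕ) (hn : 1 ≤ n)
    (M : Matrix (Fin n) (Fin (m + 1)) ℝ) (η : ℝ) (hη : 0 < η)
    (a : Fin n → ℝ) (b : Fin (m + 1) → ℝ)
    (ha : ∀ i, 0 < a i) (hb : ∀ j, 0 < b j)
    (hsa : ∑ i, a i = 1) (hsb : ∑ j, b j = 1)
    (f : EuclideanSpace ℝ (Fin n ⊕ Fin m) → ℝ)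
    (hf : ∀ x : EuclideanSpace ℝ (Fin n ⊕ Fin m),
      f x = η * ∑ i, ∑ j, Real.exp
          ((x (Sum.inl i) + Fin.snoc (α := fun _ => ℝ) (fun j' : Fin m => x (Sum.inr j')) 0 j
            - M i j) / η)
        - ∑ i, x (Sum.inl i) * a i
        - ∑ j : Fin m, x (Sum.inr j) * b (Fin.castSucc j))
    (x₀ : EuclideanSpace ℝ (Fin n ⊕ Fin m)) :
    Convex ℝ {x : EuclideanSpace ℝ (Fin n ⊕ Fin m) | f x ≤ f x₀} ∧
    IsCompact {x : EuclideanSpace ℝ (Fin n ⊕ Fin m) | f x ≤ f x₀} := by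
  set φ : Fin n × Fin (m + 1) → ℝ → ℝ := fun p => dualTerm η (M p.1 p.2) (a p.1 * b p.2)
  have hsublevel : {x | f x ≤ f x₀} = potentialSum n m ⁻¹' {v | ∑ p, φ p (v p) ≤ f x₀} := by
    ext x
    simp [φ, hf x, dualObjective_eq_sum_dualTerm M η hsa hsb x]
  rw [hsublevel]
  constructor
  · exact (convex_setOf_sum_apply_le (φ := φ)
      (fun p => convexOn_dualTerm hη.le (M p.1 p.2) (a p.1 * b p.2)) (f x₀)).linear_preimage _
  · have hemb := LinearMap.isClosedEmbedding_of_injective (𝕜 := ℝ) (ker_potentialSum (m := m) hn)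
    have hK := isCompact_setOf_sum_apply_le (φ := φ)
      (fun p => continuous_dualTerm η (M p.1 p.2) (a p.1 * b p.2))
      (fun p => tendsto_dualTerm_cocompact hη (mul_pos (ha p.1) (hb p.2)) (M p.1 p.2)) (f x₀)
    exact hemb.isCompact_preimage hK

/-- Every sublevel set of the reduced dual objective is convex and
compact (the paper's `m` equals our `m+1`; the domain `ℝ^{n+m−1}` is
`EuclideanSpace ℝ (Fin n ⊕ Fin m)`). -/
theorem stmt12 (n m : ℕ) (hn : 1 ≤ n) (hm : 1 ≤ m)
    (M : Matrix (Fin n) (Fin (m + 1)) ℝ) (η : ℝ) (hη : 0 < η)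
    (a : Fin n → ℝ) (b : Fin (m + 1) → ℝ)
    (ha : ∀ i, 0 < a i) (hb : ∀ j, 0 < b j)
    (hsa : ∑ i, a i = 1) (hsb : ∑ j, b j = 1)
    (f : EuclideanSpace ℝ (Fin n ⊕ Fin m) → ℝ)
    (hf : ∀ x : EuclideanSpace ℝ (Fin n ⊕ Fin m),
      f x = η * ∑ i, ∑ j, Real.exp
          ((x (Sum.inl i) + Fin.snoc (α := fun _ => ℝ) (fun j' : Fin m => x (Sum.inr j')) 0 j
            - M i j) / η)
        - ∑ i, x (Sum.inl i) * a i
        - ∑ j : Fin m, x (Sum.inr j) * b (Fin.castSucc j))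
    (x₀ : EuclideanSpace ℝ (Fin n ⊕ Fin m)) :
    Convex ℝ {x : EuclideanSpace ℝ (Fin n ⊕ Fin m) | f x ≤ f x₀} ∧
    IsCompact {x : EuclideanSpace ℝ (Fin n ⊕ Fin m) | f x ≤ f x₀} :=
  stmt12_general n m hn M η hη a b ha hb hsa hsb f hf x₀
end

section
/- For any dual variables α ∈ ℝ^n, β ∈ ℝ^m, let T have entries T_{ij} = exp((α_i + β_j − M_{ij})/η), and define the primal value L_p = ⟨T, M⟩ − η·h(T) with h(T) = Σ_{i,j} T_{ij}(1 − log T_{ij}), and the dual value L_d = −η Σ_{i,j} T_{ij} + α^T a + β^T b. Then the duality gap satisfies the exact identity L_p − L_d = α^T(T 1_m − a) + β^T(T^T 1_n − b), where 1_k is the all-ones vector in ℝ^k. -/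
/-- Exact identity for the duality gap:
`L_p − L_d = α^T(T 1_m − a) + β^T(T^T 1_n − b)`. -/
theorem stmt13 (n m : ℕ) (hn : 1 ≤ n) (hm : 1 ≤ m)
    (M : Matrix (Fin n) (Fin m) ℝ) (η : ℝ) (hη : 0 < η)
    (a : Fin n → ℝ) (b : Fin m → ℝ)
    (ha : ∀ i, 0 < a i) (hb : ∀ j, 0 < b j)
    (hsa : ∑ i, a i = 1) (hsb : ∑ j, b j = 1)
    (α : Fin n → ℝ) (β : Fin m → ℝ)
    (T : Matrix (Fin n) (Fin m) ℝ)
    (hT : ∀ i j, T i j = Real.exp ((α i + β j - M i j) / η))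
    (Lp Ld : ℝ)
    (hLp : Lp = (∑ i, ∑ j, T i j * M i j)
      - η * ∑ i, ∑ j, T i j * (1 - Real.log (T i j)))
    (hLd : Ld = -η * (∑ i, ∑ j, T i j) + (∑ i, α i * a i) + (∑ j, β j * b j)) :
    Lp - Ld = (∑ i, α i * ((∑ j, T i j) - a i)) + (∑ j, β j * ((∑ i, T i j) - b j)) := by
  have key : ∀ i j, T i j * M i j - η * (T i j * (1 - Real.log (T i j)))
      = α i * T i j + β j * T i j - η * T i j := by
    intro i j
    rw [hT, Real.log_exp]
    field_simp
    ring
  have h1 : (∑ i, ∑ j, T i j * M i j) - η * ∑ i, ∑ j, T i j * (1 - Real.log (T i j))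
      = ∑ i, ∑ j, (α i * T i j + β j * T i j - η * T i j) := by
    simp_rw [Finset.mul_sum, ← Finset.sum_sub_distrib]
    exact Finset.sum_congr rfl fun i _ => Finset.sum_congr rfl fun j _ => key i j
  rw [hLp, hLd, h1]
  simp_rw [mul_sub, Finset.mul_sum, Finset.sum_sub_distrib, Finset.sum_add_distrib]
  rw [Finset.sum_comm (f := fun i j => β j * T i j)]
  simp only [neg_mul, Finset.sum_neg_distrib]
  ring
end

section
/- For any dual variables α ∈ ℝ^n, β ∈ ℝ^m, let T have entries T_{ij} = exp((α_i + β_j − M_{ij})/η), let L_p = ⟨T, M⟩ − η·h(T) with h(T) = Σ_{i,j} T_{ij}(1 − log T_{ij}), and let L_d = −η Σ_{i,j} T_{ij} + α^T a + β^T b. Then |L_p − L_d| ≤ max{‖α‖_∞, ‖β‖_∞} · (‖T 1_m − a‖₁ + ‖T^T 1_n − b‖₁), i.e. the duality gap is bounded by the marginal error of the transport plan T times the supremum norm of the dual variables. -/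
/-- The duality gap is bounded by the marginal error times the sup
norm of the dual variables:
`|L_p − L_d| ≤ max{‖α‖_∞, ‖β‖_∞} · (‖T 1_m − a‖₁ + ‖T^T 1_n − b‖₁)`. -/
theorem stmt14 (n m : ℕ) (hn : 1 ≤ n) (hm : 1 ≤ m)
    (M : Matrix (Fin n) (Fin m) ℝ) (η : ℝ) (hη : 0 < η)
    (a : Fin n → ℝ) (b : Fin m → ℝ)
    (ha : ∀ i, 0 < a i) (hb : ∀ j, 0 < b j)
    (hsa : ∑ i, a i = 1) (hsb : ∑ j, b j = 1)
    (α : Fin n → ℝ) (β : Fin m → ℝ)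
    (T : Matrix (Fin n) (Fin m) ℝ)
    (hT : ∀ i j, T i j = Real.exp ((α i + β j - M i j) / η))
    (Lp Ld : ℝ)
    (hLp : Lp = (∑ i, ∑ j, T i j * M i j)
      - η * ∑ i, ∑ j, T i j * (1 - Real.log (T i j)))
    (hLd : Ld = -η * (∑ i, ∑ j, T i j) + (∑ i, α i * a i) + (∑ j, β j * b j)) :
    |Lp - Ld| ≤ max (⨆ i, |α i|) (⨆ j, |β j|) *
      ((∑ i, |(∑ j, T i j) - a i|) + (∑ j, |(∑ i, T i j) - b j|)) := by
  haveI : Nonempty (Fin n) := ⟨⟨0, hn⟩⟩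
  haveI : Nonempty (Fin m) := ⟨⟨0, hm⟩⟩
  have hlog : ∀ i j, Real.log (T i j) = (α i + β j - M i j) / η := by
    intro i j; rw [hT]; exact Real.log_exp _
  set C := max (⨆ i, |α i|) (⨆ j, |β j|) with hC
  have hαC : ∀ i, |α i| ≤ C := fun i =>
    le_trans (le_ciSup (f := fun i => |α i|) (Finite.bddAbove_range _) i)
      (le_max_left _ _)
  have hβC : ∀ j, |β j| ≤ C := fun j =>
    le_trans (le_ciSup (f := fun j => |β j|) (Finite.bddAbove_range _) j)
      (le_max_right _ _)
  have h1 : Lp = ∑ i, ∑ j, (T i j * (α i + β j) - η * T i j) := by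
    rw [hLp, Finset.mul_sum, ← Finset.sum_sub_distrib]
    refine Finset.sum_congr rfl fun i _ => ?_
    rw [Finset.mul_sum, ← Finset.sum_sub_distrib]
    refine Finset.sum_congr rfl fun j _ => ?_
    rw [hlog]
    field_simp
    ring
  have hβswap : ∑ j, β j * (∑ i, T i j) = ∑ i, ∑ j, β j * T i j := by
    rw [Finset.sum_comm]
    exact Finset.sum_congr rfl fun j _ => Finset.mul_sum _ _ _
  have key : Lp - Ld = (∑ i, α i * ((∑ j, T i j) - a i))
      + (∑ j, β j * ((∑ i, T i j) - b j)) := by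
    rw [h1, hLd]
    have e1 : ∑ i, α i * ((∑ j, T i j) - a i)
        = (∑ i, ∑ j, α i * T i j) - ∑ i, α i * a i := by
      rw [← Finset.sum_sub_distrib]
      refine Finset.sum_congr rfl fun i _ => ?_
      rw [mul_sub, Finset.mul_sum]
    have e2 : ∑ j, β j * ((∑ i, T i j) - b j)
        = (∑ i, ∑ j, β j * T i j) - ∑ j, β j * b j := by
      rw [← hβswap, ← Finset.sum_sub_distrib]
      refine Finset.sum_congr rfl fun j _ => ?_
      ring
    rw [e1, e2]
    have e3 : ∑ i, ∑ j, (T i j * (α i + β j) - η * T i j)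
        = (∑ i, ∑ j, α i * T i j) + (∑ i, ∑ j, β j * T i j)
          - η * (∑ i, ∑ j, T i j) := by
      rw [Finset.mul_sum, ← Finset.sum_add_distrib, ← Finset.sum_sub_distrib]
      refine Finset.sum_congr rfl fun i _ => ?_
      rw [Finset.mul_sum, ← Finset.sum_add_distrib, ← Finset.sum_sub_distrib]
      refine Finset.sum_congr rfl fun j _ => ?_
      ring
    rw [e3]
    ring
  rw [key, mul_add]
  refine le_trans (abs_add_le _ _) (add_le_add ?_ ?_)
  · refine le_trans (Finset.abs_sum_le_sum_abs _ _) ?_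
    rw [Finset.mul_sum]
    refine Finset.sum_le_sum fun i _ => ?_
    rw [abs_mul]
    exact mul_le_mul_of_nonneg_right (hαC i) (abs_nonneg _)
  · refine le_trans (Finset.abs_sum_le_sum_abs _ _) ?_
    rw [Finset.mul_sum]
    refine Finset.sum_le_sum fun j _ => ?_
    rw [abs_mul]
    exact mul_le_mul_of_nonneg_right (hβC j) (abs_nonneg _)
end

section
/- Suppose the dual variables α ∈ ℝ^n, β ∈ ℝ^m are such that the matrix T with entries T_{ij} = exp((α_i + β_j − M_{ij})/η) satisfies the marginal constraints T 1_m = a and T^T 1_n = b, i.e. T ∈ Π(a,b) = {P ∈ ℝ^{n×m} : P 1_m = a, P^T 1_n = b, P ≥ 0}. Then T is optimal for the entropic-regularized optimal transport problem: for every P ∈ Π(a,b), ⟨T, M⟩ − η·h(T) ≤ ⟨P, M⟩ − η·h(P), where h(P) = Σ_{i,j} P_{ij}(1 − log P_{ij}) and the summand is interpreted as 0 when P_{ij} = 0. -/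
/-!
Writing `M i j = α i + β j - η log T i j`, the marginal constraints make `∑ X (α i + β j)` the same
for every transport plan `X`, so the entropic cost of a plan `P` exceeds that of the Gibbs plan `T`
by `η ∑ (P log P - P log T - P + T)`, a generalized Kullback–Leibler divergence, which is
nonnegative by `log t ≤ t - 1`.
-/

open Finset Real

theorem Real.sub_le_mul_log_sub_mul_log {x y : ℝ} (hx : 0 ≤ x) (hy : 0 < y) :
    x - y ≤ x * log x - x * log y := by
  rcases hx.eq_or_lt with rfl | hx
  · simpa using hy.le
  have h : log (y / x) ≤ y / x - 1 := log_le_sub_one_of_pos (div_pos hy hx)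
  rw [log_div hy.ne' hx.ne'] at h
  have := mul_le_mul_of_nonneg_left h hx.le
  rw [mul_sub, mul_sub, mul_div_cancel₀ _ hx.ne', mul_one] at this
  linarith

section

variable {ι κ : Type*} [Fintype ι] [Fintype κ]

noncomputable def entropicTransportCost (η : ℝ) (M X : Matrix ι κ ℝ) : ℝ :=
  (∑ i, ∑ j, X i j * M i j) - η * (∑ i, ∑ j, X i j * (1 - log (X i j)))

theorem Matrix.sum_sum_sub_le_sum_sum_mul_log_sub {P T : Matrix ι κ ℝ}
    (hP : ∀ i j, 0 ≤ P i j) (hT : ∀ i j, 0 < T i j) :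
    ∑ i, ∑ j, P i j - ∑ i, ∑ j, T i j ≤
      ∑ i, ∑ j, (P i j * log (P i j) - P i j * log (T i j)) := by
  simp only [← sum_sub_distrib]
  exact sum_le_sum fun i _ ↦ sum_le_sum fun j _ ↦ sub_le_mul_log_sub_mul_log (hP i j) (hT i j)

theorem Matrix.sum_sum_mul_add (X : Matrix ι κ ℝ) (α : ι → ℝ) (β : κ → ℝ) :
    ∑ i, ∑ j, X i j * (α i + β j) = ∑ i, α i * ∑ j, X i j + ∑ j, β j * ∑ i, X i j := by
  simp only [mul_add, sum_add_distrib, mul_sum]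
  rw [sum_comm (f := fun i j ↦ X i j * β j)]
  simp only [mul_comm]

theorem entropicTransportCost_eq_of_gibbs {η : ℝ} (hη : η ≠ 0) {M T : Matrix ι κ ℝ}
    {α : ι → ℝ} {β : κ → ℝ} (hT : ∀ i j, T i j = exp ((α i + β j - M i j) / η))
    (X : Matrix ι κ ℝ) :
    entropicTransportCost η M X =
      ∑ i, α i * ∑ j, X i j + ∑ j, β j * ∑ i, X i j - η * ∑ i, ∑ j, X i j +
        η * ∑ i, ∑ j, (X i j * log (X i j) - X i j * log (T i j)) := by
  have hM : ∀ i j, M i j = α i + β j - η * log (T i j) := by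
    intro i j
    rw [hT, log_exp, mul_div_cancel₀ _ hη]
    ring
  rw [entropicTransportCost, ← X.sum_sum_mul_add α β]
  simp only [hM, mul_sum, ← sum_sub_distrib, ← sum_add_distrib]
  refine sum_congr rfl fun i _ ↦ sum_congr rfl fun j _ ↦ ?_
  ring

theorem entropicTransportCost_gibbs_le {η : ℝ} (hη : 0 < η) {M T P : Matrix ι κ ℝ}
    {α : ι → ℝ} {β : κ → ℝ} (hT : ∀ i j, T i j = exp ((α i + β j - M i j) / η))
    (hrow : ∀ i, ∑ j, P i j = ∑ j, T i j) (hcol : ∀ j, ∑ i, P i j = ∑ i, T i j)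
    (hP : ∀ i j, 0 ≤ P i j) :
    entropicTransportCost η M T ≤ entropicTransportCost η M P := by
  have hTpos : ∀ i j, 0 < T i j := fun i j ↦ hT i j ▸ exp_pos _
  have hmass : ∑ i, ∑ j, P i j = ∑ i, ∑ j, T i j := sum_congr rfl fun i _ ↦ hrow i
  have hKL : 0 ≤ ∑ i, ∑ j, (P i j * log (P i j) - P i j * log (T i j)) := by
    linarith [Matrix.sum_sum_sub_le_sum_sum_mul_log_sub hP hTpos]
  rw [entropicTransportCost_eq_of_gibbs hη.ne' hT, entropicTransportCost_eq_of_gibbs hη.ne' hT]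
  simp only [hrow, hcol, sub_self, sum_const_zero, mul_zero, add_zero]
  linarith [mul_nonneg hη.le hKL]

end

theorem stmt16_general (n m : ℕ)
    (M : Matrix (Fin n) (Fin m) ℝ) (η : ℝ) (hη : 0 < η)
    (a : Fin n → ℝ) (b : Fin m → ℝ)
    (α : Fin n → ℝ) (β : Fin m → ℝ)
    (T : Matrix (Fin n) (Fin m) ℝ)
    (hT : ∀ i j, T i j = Real.exp ((α i + β j - M i j) / η))
    (hTrow : ∀ i, ∑ j, T i j = a i)
    (hTcol : ∀ j, ∑ i, T i j = b j) :
    ∀ P : Matrix (Fin n) (Fin m) ℝ,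
      (∀ i, ∑ j, P i j = a i) → (∀ j, ∑ i, P i j = b j) → (∀ i j, 0 ≤ P i j) →
      (∑ i, ∑ j, T i j * M i j) - η * (∑ i, ∑ j, T i j * (1 - Real.log (T i j))) ≤
      (∑ i, ∑ j, P i j * M i j) - η * (∑ i, ∑ j, P i j * (1 - Real.log (P i j))) :=
  fun _ hProw hPcol hP ↦ entropicTransportCost_gibbs_le hη hT
    (fun i ↦ (hProw i).trans (hTrow i).symm) (fun j ↦ (hPcol j).trans (hTcol j).symm) hP

/-- If the Gibbs-form matrix `T_{ij} = exp((α_i + β_j − M_{ij})/η)`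
satisfies both marginal constraints, then `T` is optimal for the
entropic-regularized OT problem. (With Mathlib's convention `Real.log 0 = 0`, the
summand `P_{ij}(1 − log P_{ij})` automatically vanishes when `P_{ij} = 0`.) -/
theorem stmt16 (n m : ℕ) (hn : 1 ≤ n) (hm : 1 ≤ m)
    (M : Matrix (Fin n) (Fin m) ℝ) (η : ℝ) (hη : 0 < η)
    (a : Fin n → ℝ) (b : Fin m → ℝ)
    (ha : ∀ i, 0 < a i) (hb : ∀ j, 0 < b j)
    (hsa : ∑ i, a i = 1) (hsb : ∑ j, b j = 1)
    (α : Fin n → ℝ) (β : Fin m → ℝ)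
    (T : Matrix (Fin n) (Fin m) ℝ)
    (hT : ∀ i j, T i j = Real.exp ((α i + β j - M i j) / η))
    (hTrow : ∀ i, ∑ j, T i j = a i)
    (hTcol : ∀ j, ∑ i, T i j = b j) :
    ∀ P : Matrix (Fin n) (Fin m) ℝ,
      (∀ i, ∑ j, P i j = a i) → (∀ j, ∑ i, P i j = b j) → (∀ i j, 0 ≤ P i j) →
      (∑ i, ∑ j, T i j * M i j) - η * (∑ i, ∑ j, T i j * (1 - Real.log (T i j))) ≤
      (∑ i, ∑ j, P i j * M i j) - η * (∑ i, ∑ j, P i j * (1 - Real.log (P i j))) :=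
  stmt16_general n m M η hη a b α β T hT hTrow hTcol
end
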